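/- arXiv:2011.11056 — 6 statements merged into one kernel-verified Lean document; each statement's English description precedes it below -/
import Mathlib

section
/- Let b ∈ {1,2,3}, and set x₀ := 1 if b is odd and x₀ := 2 if b is even. Then for every integer a ≥ b+2 and every real number x > x₀, the derivative satisfies Δ_{a,b}′(x) > 0. -/
open Polynomial Finset

/-- The polynomials `P n` defined by `P 0 = 1` and
`n * P n = X * ∑_{k=1}^n σ(k) * P (n-k)`, i.e. the coefficients of
`∏ (1 - q^j)^{-x} = ∑ P_n(x) q^n`. -/
noncomputable def P : ℕ → Polynomial ℝ
  | 0 => 1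
  | n + 1 => ((n + 1 : ℝ)⁻¹) • (X * ∑ k ∈ Finset.range (n + 1),
      ((∑ d ∈ (k + 1).divisors, d : ℕ) : ℝ) • P (n - k))

/-- `Δ a b = P (a-1) * P (b+1) - P a * P b`. -/
noncomputable def Δ (a b : ℕ) : Polynomial ℝ :=
  P (a - 1) * P (b + 1) - P a * P b

/-!
Put `c = 1` for odd `b`, `c = 2` for even `b`, and `D a = Δ a b (X + c)` (`shiftedΔ c a b`). It
suffices that `D a` has nonnegative coefficients and a positive coefficient of `X` for `a ≥ b + 2`,
for then `D a' (t) > 0` at every `t ≥ 0`.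

The recurrence of `P`, shifted by `c`, gives
`(n + 1) D (n + 1) = P n P (b + 1) + (X + c) ∑_{k<n} σ(k+1) D (n - k) - σ(n+1) (X + c) P b`.
With `U = (X + c)^(b+1) P b` (`comparisonPoly`), one shows by induction that `D a ≥ r a U`
coefficientwise for `a > M`: the negative contributions on the right (the `D a` with `a ≤ b`, which
are `≥ -κ U`, and the last term) are of size `O(n²) U`, while the induction hypothesis provides
`r ∑ σ(k+1) (n-k) U`, of size `n³ U` since `σ(k) ≥ k`; the bound `8 σ(k) ≤ k² + 10 k` makes the
comparison explicit from some `n = A` on. The finitely many cases `a ≤ A` are verified in exact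
rational arithmetic on coefficient lists, evaluated by the kernel.
-/

open ArithmeticFunction
open scoped ArithmeticFunction.sigma

namespace Polynomial

section NonnegCoeffs

def nonnegCoeffs (R : Type*) [Semiring R] [PartialOrder R] [IsOrderedRing R] :
    Subsemiring R[X] where
  carrier := {p | ∀ n, 0 ≤ p.coeff n}
  mul_mem' {p q} hp hq n := by
    rw [coeff_mul]
    exact sum_nonneg fun x _ => mul_nonneg (hp x.1) (hq x.2)
  one_mem' n := by
    rw [coeff_one]
    split_ifs <;> simp
  add_mem' hp hq n := by
    rw [coeff_add]
    exact add_nonneg (hp n) (hq n)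
  zero_mem' n := by simp

variable {R : Type*}

section Semiring

variable [Semiring R] [PartialOrder R] [IsOrderedRing R] {p : R[X]}

theorem C_mem_nonnegCoeffs {a : R} (ha : 0 ≤ a) : C a ∈ nonnegCoeffs R := fun n => by
  rw [coeff_C]
  split_ifs
  exacts [ha, le_rfl]

theorem X_mem_nonnegCoeffs : (X : R[X]) ∈ nonnegCoeffs R := fun n => by
  rw [coeff_X]
  split_ifs <;> simp

theorem X_add_C_mem_nonnegCoeffs {c : R} (hc : 0 ≤ c) : X + C c ∈ nonnegCoeffs R :=
  add_mem X_mem_nonnegCoeffs (C_mem_nonnegCoeffs hc)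

theorem eval_nonneg_of_mem_nonnegCoeffs (hp : p ∈ nonnegCoeffs R) {t : R} (ht : 0 ≤ t) :
    0 ≤ p.eval t := by
  rw [eval_eq_sum_range]
  exact sum_nonneg fun i _ => mul_nonneg (hp i) (pow_nonneg ht i)

theorem divX_mem_nonnegCoeffs (hp : p ∈ nonnegCoeffs R) : p.divX ∈ nonnegCoeffs R := fun n => by
  rw [coeff_divX]
  exact hp (n + 1)

theorem coeff_zero_le_eval (hp : p ∈ nonnegCoeffs R) {t : R} (ht : 0 ≤ t) :
    p.coeff 0 ≤ p.eval t := by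
  conv_rhs => rw [← divX_mul_X_add p]
  rw [eval_add, eval_mul_X, eval_C]
  exact le_add_of_nonneg_left
    (mul_nonneg (eval_nonneg_of_mem_nonnegCoeffs (divX_mem_nonnegCoeffs hp) ht) ht)

theorem derivative_mem_nonnegCoeffs (hp : p ∈ nonnegCoeffs R) :
    derivative p ∈ nonnegCoeffs R := fun n => by
  rw [coeff_derivative]
  exact mul_nonneg (hp (n + 1)) (add_nonneg n.cast_nonneg zero_le_one)

theorem coeff_one_le_eval_derivative (hp : p ∈ nonnegCoeffs R) {t : R} (ht : 0 ≤ t) :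
    p.coeff 1 ≤ (derivative p).eval t := by
  simpa only [coeff_derivative, Nat.cast_zero, zero_add, mul_one] using
    coeff_zero_le_eval (derivative_mem_nonnegCoeffs hp) ht

end Semiring

section CommRing

variable [CommRing R] [PartialOrder R] [IsOrderedRing R] {c : R}

theorem X_add_C_pow_sub_one_mem_nonnegCoeffs (hc : 1 ≤ c) (k : ℕ) :
    (X + C c) ^ k - 1 ∈ nonnegCoeffs R := by
  induction k with
  | zero => simp
  | succ k ih =>
    have hc₀ : 0 ≤ c := zero_le_one.trans hc
    have h : (X + C c) ^ (k + 1) - 1 =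
        X * (X + C c) ^ k + C c * ((X + C c) ^ k - 1) + C (c - 1) := by
      rw [C_sub, C_1]; ring
    rw [h]
    exact add_mem (add_mem (mul_mem X_mem_nonnegCoeffs (pow_mem (X_add_C_mem_nonnegCoeffs hc₀) k))
      (mul_mem (C_mem_nonnegCoeffs hc₀) ih)) (C_mem_nonnegCoeffs (sub_nonneg.2 hc))

theorem derivative_eval_pos_of_comp_X_add_C {p : R[X]} {x : R}
    (hp : p.comp (X + C c) ∈ nonnegCoeffs R) (h₁ : 0 < (p.comp (X + C c)).coeff 1) (hx : c ≤ x) :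
    0 < (derivative p).eval x := by
  have h := coeff_one_le_eval_derivative hp (sub_nonneg.2 hx)
  simp only [derivative_comp, derivative_add, derivative_X, derivative_C, add_zero, one_mul,
    eval_comp, eval_add, eval_X, eval_C, sub_add_cancel] at h
  exact h₁.trans_le h

end CommRing

end NonnegCoeffs

end Polynomial

section Shifted

variable (c : ℝ)

noncomputable def shiftedP (n : ℕ) : ℝ[X] := (P n).comp (X + C c)

noncomputable def shiftedΔ (a b : ℕ) : ℝ[X] := (Δ a b).comp (X + C c)

noncomputable def comparisonPoly (b : ℕ) : ℝ[X] := (X + C c) ^ (b + 1) * shiftedP c b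

theorem shiftedP_zero : shiftedP c 0 = 1 := by
  simp [shiftedP, P]

theorem shiftedP_succ (n : ℕ) :
    shiftedP c (n + 1) = C ((n + 1 : ℝ)⁻¹) *
      ((X + C c) * ∑ k ∈ range (n + 1), (σ 1 (k + 1) : ℝ[X]) * shiftedP c (n - k)) := by
  simp only [shiftedP, P, smul_eq_C_mul, mul_comp, C_comp, X_comp, Polynomial.sum_comp,
    sigma_one_apply, ← C_eq_natCast]

theorem natCast_mul_shiftedP (n : ℕ) :
    (n : ℝ[X]) * shiftedP c n =
      (X + C c) * ∑ k ∈ range n, (σ 1 (k + 1) : ℝ[X]) * shiftedP c (n - 1 - k) := by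
  cases n with
  | zero => simp
  | succ n =>
    rw [shiftedP_succ, ← mul_assoc, ← C_eq_natCast, ← C_mul, Nat.add_sub_cancel]
    push_cast
    rw [mul_inv_cancel₀ (by positivity), C_1, one_mul]

theorem shiftedΔ_eq (a b : ℕ) :
    shiftedΔ c a b = shiftedP c (a - 1) * shiftedP c (b + 1) - shiftedP c a * shiftedP c b := by
  simp only [shiftedΔ, Δ, shiftedP, sub_comp, mul_comp]

theorem natCast_mul_shiftedΔ_succ (n b : ℕ) :
    ((n + 1 : ℕ) : ℝ[X]) * shiftedΔ c (n + 1) b =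
      shiftedP c n * shiftedP c (b + 1)
        + (X + C c) * ∑ k ∈ range n, (σ 1 (k + 1) : ℝ[X]) * shiftedΔ c (n - k) b
        - (σ 1 (n + 1) : ℝ[X]) * ((X + C c) * shiftedP c b) := by
  have hn := natCast_mul_shiftedP c n
  have hn1 := natCast_mul_shiftedP c (n + 1)
  rw [sum_range_succ, Nat.add_sub_cancel, Nat.sub_self, shiftedP_zero] at hn1
  have hsum : ∑ k ∈ range n, (σ 1 (k + 1) : ℝ[X]) * shiftedΔ c (n - k) b =
      (∑ k ∈ range n, (σ 1 (k + 1) : ℝ[X]) * shiftedP c (n - 1 - k)) * shiftedP c (b + 1)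
        - (∑ k ∈ range n, (σ 1 (k + 1) : ℝ[X]) * shiftedP c (n - k)) * shiftedP c b := by
    rw [sum_mul, sum_mul, ← sum_sub_distrib]
    refine sum_congr rfl fun k hk => ?_
    rw [shiftedΔ_eq, show n - k - 1 = n - 1 - k by omega]
    ring
  rw [shiftedΔ_eq, Nat.add_sub_cancel, hsum]
  linear_combination (norm := (push_cast; ring1)) shiftedP c (b + 1) * hn - shiftedP c b * hn1

end Shifted

section Induction

variable {c : ℝ}

theorem shiftedP_mem_nonnegCoeffs (hc : 0 ≤ c) (n : ℕ) :
    shiftedP c n ∈ nonnegCoeffs ℝ := by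
  induction n using Nat.strong_induction_on with
  | _ n ih =>
    cases n with
    | zero => simp [shiftedP_zero]
    | succ n =>
      rw [shiftedP_succ]
      refine mul_mem (C_mem_nonnegCoeffs (by positivity)) (mul_mem (X_add_C_mem_nonnegCoeffs hc) ?_)
      exact sum_mem fun k hk => mul_mem (natCast_mem _ _) (ih _ (by omega))

theorem comparisonPoly_mem_nonnegCoeffs (hc : 0 ≤ c) (b : ℕ) :
    comparisonPoly c b ∈ nonnegCoeffs ℝ :=
  mul_mem (pow_mem (X_add_C_mem_nonnegCoeffs hc) _) (shiftedP_mem_nonnegCoeffs hc b)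

theorem comparisonPoly_sub_shiftedP_mem_nonnegCoeffs (hc : 1 ≤ c) (b : ℕ) :
    comparisonPoly c b - shiftedP c b ∈ nonnegCoeffs ℝ := by
  rw [comparisonPoly, ← sub_one_mul]
  exact mul_mem (X_add_C_pow_sub_one_mem_nonnegCoeffs hc _)
    (shiftedP_mem_nonnegCoeffs (zero_le_one.trans hc) b)

theorem X_add_C_mul_comparisonPoly_sub_mem_nonnegCoeffs (hc : 1 ≤ c) (b : ℕ) :
    (X + C c) * comparisonPoly c b - comparisonPoly c b ∈ nonnegCoeffs ℝ := by
  rw [← sub_one_mul, add_sub_assoc, ← C_1, ← C_sub]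
  exact mul_mem (X_add_C_mem_nonnegCoeffs (sub_nonneg.2 hc))
    (comparisonPoly_mem_nonnegCoeffs (zero_le_one.trans hc) b)

variable {r κ : ℝ} {b M A n : ℕ}

theorem sum_sigma_mul_shiftedΔ_sub_mem_nonnegCoeffs (hbM : b ≤ M) (hMn : M ≤ n)
    (hsmall : ∀ a ∈ Icc 1 b, shiftedΔ c a b + C κ * comparisonPoly c b ∈ nonnegCoeffs ℝ)
    (hmid : ∀ a ∈ Ioc b M, shiftedΔ c a b ∈ nonnegCoeffs ℝ)
    (hlarge : ∀ a ∈ Ioc M n, shiftedΔ c a b - C (r * a) * comparisonPoly c b ∈ nonnegCoeffs ℝ) :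
    ∑ k ∈ range n, (σ 1 (k + 1) : ℝ[X]) * shiftedΔ c (n - k) b
      - C (r * ∑ k ∈ range (n - M), (σ 1 (k + 1) : ℝ) * (n - k : ℕ)
          - κ * ∑ k ∈ Ico (n - b) n, (σ 1 (k + 1) : ℝ)) * comparisonPoly c b
      ∈ nonnegCoeffs ℝ := by
  set U := comparisonPoly c b
  have hlarge' : ∀ k ∈ range (n - M), (σ 1 (k + 1) : ℝ[X]) *
      (shiftedΔ c (n - k) b - C (r * (n - k : ℕ)) * U) ∈ nonnegCoeffs ℝ := fun k hk =>
    mul_mem (natCast_mem _ _) (hlarge _ (by simp only [mem_range, mem_Ioc] at hk ⊢; omega))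
  have hmid' : ∀ k ∈ Ico (n - M) (n - b), (σ 1 (k + 1) : ℝ[X]) * shiftedΔ c (n - k) b
      ∈ nonnegCoeffs ℝ := fun k hk =>
    mul_mem (natCast_mem _ _) (hmid _ (by simp only [mem_Ico, mem_Ioc] at hk ⊢; omega))
  have hsmall' : ∀ k ∈ Ico (n - b) n, (σ 1 (k + 1) : ℝ[X]) *
      (shiftedΔ c (n - k) b + C κ * U) ∈ nonnegCoeffs ℝ := fun k hk =>
    mul_mem (natCast_mem _ _) (hsmall _ (by simp only [mem_Ico, mem_Icc] at hk ⊢; omega))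
  have hU₁ : ∑ k ∈ range (n - M), (σ 1 (k + 1) : ℝ[X]) * (C (r * (n - k : ℕ)) * U) =
      C (r * ∑ k ∈ range (n - M), (σ 1 (k + 1) : ℝ) * (n - k : ℕ)) * U := by
    simp only [mul_sum, map_sum, sum_mul, map_mul, map_natCast]
    exact sum_congr rfl fun _ _ => by ring
  have hU₂ : ∑ k ∈ Ico (n - b) n, (σ 1 (k + 1) : ℝ[X]) * (C κ * U) =
      C (κ * ∑ k ∈ Ico (n - b) n, (σ 1 (k + 1) : ℝ)) * U := by
    simp only [mul_sum, map_sum, sum_mul, map_mul, map_natCast]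
    exact sum_congr rfl fun _ _ => by ring
  convert add_mem (add_mem (sum_mem hlarge') (sum_mem hmid')) (sum_mem hsmall') using 1
  simp only [mul_sub, mul_add, sum_sub_distrib, sum_add_distrib, hU₁, hU₂, map_sub, sub_mul]
  rw [← sum_range_add_sum_Ico _ (show n - M ≤ n by omega),
    ← sum_Ico_consecutive _ (show n - M ≤ n - b by omega) (show n - b ≤ n by omega)]
  ring

theorem shiftedΔ_succ_sub_mem_nonnegCoeffs (hc : 1 ≤ c) (hr : 0 ≤ r) (hbM : b ≤ M) (hMn : M ≤ n)
    (hσ : κ * ∑ k ∈ Ico (n - b) n, (σ 1 (k + 1) : ℝ) + σ 1 (n + 1) + r * (n + 1) ^ 2 ≤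
      r * ∑ k ∈ range (n - M), (σ 1 (k + 1) : ℝ) * (n - k : ℕ))
    (hsmall : ∀ a ∈ Icc 1 b, shiftedΔ c a b + C κ * comparisonPoly c b ∈ nonnegCoeffs ℝ)
    (hmid : ∀ a ∈ Ioc b M, shiftedΔ c a b ∈ nonnegCoeffs ℝ)
    (hlarge : ∀ a ∈ Ioc M n, shiftedΔ c a b - C (r * a) * comparisonPoly c b ∈ nonnegCoeffs ℝ) :
    shiftedΔ c (n + 1) b - C (r * (n + 1 : ℕ)) * comparisonPoly c b ∈ nonnegCoeffs ℝ := by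
  have hc₀ : 0 ≤ c := zero_le_one.trans hc
  set U := comparisonPoly c b
  set S := r * ∑ k ∈ range (n - M), (σ 1 (k + 1) : ℝ) * (n - k : ℕ)
    - κ * ∑ k ∈ Ico (n - b) n, (σ 1 (k + 1) : ℝ)
  have hS : 0 ≤ S - σ 1 (n + 1) - r * (n + 1) ^ 2 := by linarith
  have key : ((n + 1 : ℕ) : ℝ[X]) * (shiftedΔ c (n + 1) b - C (r * (n + 1 : ℕ)) * U) =
      shiftedP c n * shiftedP c (b + 1)
      + (X + C c) * (∑ k ∈ range n, (σ 1 (k + 1) : ℝ[X]) * shiftedΔ c (n - k) b - C S * U)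
      + (σ 1 (n + 1) : ℝ[X]) * ((X + C c) * (U - shiftedP c b))
      + C (r * (n + 1) ^ 2) * ((X + C c) * U - U)
      + C (S - σ 1 (n + 1) - r * (n + 1) ^ 2) * ((X + C c) * U) := by
    rw [mul_sub, natCast_mul_shiftedΔ_succ]
    simp only [map_sub, map_mul, map_pow, map_add, map_natCast, map_one]
    push_cast
    ring
  have hmem : ((n + 1 : ℕ) : ℝ[X]) * (shiftedΔ c (n + 1) b - C (r * (n + 1 : ℕ)) * U)
      ∈ nonnegCoeffs ℝ := by
    rw [key]
    refine add_mem (add_mem (add_mem (add_mem ?_ ?_) ?_) ?_) ?_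
    · exact mul_mem (shiftedP_mem_nonnegCoeffs hc₀ n) (shiftedP_mem_nonnegCoeffs hc₀ (b + 1))
    · exact mul_mem (X_add_C_mem_nonnegCoeffs hc₀)
        (sum_sigma_mul_shiftedΔ_sub_mem_nonnegCoeffs hbM hMn hsmall hmid hlarge)
    · exact mul_mem (natCast_mem _ _) (mul_mem (X_add_C_mem_nonnegCoeffs hc₀)
        (comparisonPoly_sub_shiftedP_mem_nonnegCoeffs hc b))
    · exact mul_mem (C_mem_nonnegCoeffs (by positivity))
        (X_add_C_mul_comparisonPoly_sub_mem_nonnegCoeffs hc b)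
    · exact mul_mem (C_mem_nonnegCoeffs hS)
        (mul_mem (X_add_C_mem_nonnegCoeffs hc₀) (comparisonPoly_mem_nonnegCoeffs hc₀ b))
  have hinv : C ((n + 1 : ℕ) : ℝ)⁻¹ * (n + 1 : ℕ) = (1 : ℝ[X]) := by
    rw [← C_eq_natCast, ← C_mul, inv_mul_cancel₀ (by positivity), C_1]
  have h := mul_mem (C_mem_nonnegCoeffs (inv_nonneg.2 (Nat.cast_nonneg (n + 1)))) hmem
  rwa [← mul_assoc, hinv, one_mul] at h

theorem shiftedΔ_sub_mem_nonnegCoeffs_of_base (hc : 1 ≤ c) (hr : 0 ≤ r) (hbM : b ≤ M)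
    (hσ : ∀ n ≥ A, κ * ∑ k ∈ Ico (n - b) n, (σ 1 (k + 1) : ℝ) + σ 1 (n + 1) + r * (n + 1) ^ 2 ≤
      r * ∑ k ∈ range (n - M), (σ 1 (k + 1) : ℝ) * (n - k : ℕ))
    (hsmall : ∀ a ∈ Icc 1 b, shiftedΔ c a b + C κ * comparisonPoly c b ∈ nonnegCoeffs ℝ)
    (hmid : ∀ a ∈ Ioc b M, shiftedΔ c a b ∈ nonnegCoeffs ℝ)
    (hlarge : ∀ a ∈ Ioc M A, shiftedΔ c a b - C (r * a) * comparisonPoly c b ∈ nonnegCoeffs ℝ) :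
    ∀ a, M < a → shiftedΔ c a b - C (r * a) * comparisonPoly c b ∈ nonnegCoeffs ℝ := by
  intro a
  induction a using Nat.strong_induction_on with
  | _ a ih =>
    intro hMa
    rcases le_or_gt a A with haA | hAa
    · exact hlarge a (mem_Ioc.2 ⟨hMa, haA⟩)
    · obtain ⟨n, rfl⟩ : ∃ n, a = n + 1 := ⟨a - 1, by omega⟩
      exact shiftedΔ_succ_sub_mem_nonnegCoeffs hc hr hbM (by omega) (hσ n (by omega)) hsmall hmid
        fun a ha => ih a (by have := mem_Ioc.1 ha; omega) (mem_Ioc.1 ha).1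

end Induction

namespace CoeffList

def add : List ℚ → List ℚ → List ℚ
  | [], l => l
  | l, [] => l
  | a :: l, b :: m => (a + b) :: add l m

def smul (r : ℚ) (l : List ℚ) : List ℚ := l.map (r * ·)

def mul : List ℚ → List ℚ → List ℚ
  | [], _ => []
  | a :: l, m => add (smul a m) (0 :: mul l m)

def pow (l : List ℚ) : ℕ → List ℚ
  | 0 => [1]
  | k + 1 => mul (pow l k) l

def sumRange (f : ℕ → List ℚ) : ℕ → List ℚ
  | 0 => []
  | m + 1 => add (sumRange f m) (f m)

noncomputable def toPoly (l : List ℚ) : ℝ[X] := l.foldr (fun a p => C (a : ℝ) + X * p) 0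

@[simp] theorem toPoly_nil : toPoly [] = 0 := rfl

@[simp] theorem toPoly_cons (a : ℚ) (l : List ℚ) : toPoly (a :: l) = C (a : ℝ) + X * toPoly l :=
  rfl

@[simp] theorem toPoly_add (l m : List ℚ) : toPoly (add l m) = toPoly l + toPoly m := by
  induction l generalizing m with
  | nil => simp [add]
  | cons a l ih =>
    cases m with
    | nil => simp [add]
    | cons b m => simp only [add, toPoly_cons, ih, Rat.cast_add, C_add]; ring

@[simp] theorem toPoly_smul (r : ℚ) (l : List ℚ) : toPoly (smul r l) = C (r : ℝ) * toPoly l := by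
  induction l with
  | nil => simp [smul]
  | cons a l ih =>
    simp only [smul, List.map_cons, toPoly_cons, Rat.cast_mul, C_mul] at ih ⊢
    rw [ih]; ring

@[simp] theorem toPoly_mul (l m : List ℚ) : toPoly (mul l m) = toPoly l * toPoly m := by
  induction l with
  | nil => simp [mul]
  | cons a l ih =>
    simp only [mul, toPoly_add, toPoly_smul, toPoly_cons, ih, Rat.cast_zero, C_0]
    ring

@[simp] theorem toPoly_pow (l : List ℚ) (k : ℕ) : toPoly (pow l k) = toPoly l ^ k := by
  induction k with
  | zero => simp [pow]
  | succ k ih => rw [pow, toPoly_mul, ih, pow_succ]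

@[simp] theorem toPoly_sumRange (f : ℕ → List ℚ) (m : ℕ) :
    toPoly (sumRange f m) = ∑ k ∈ range m, toPoly (f k) := by
  induction m with
  | zero => simp [sumRange]
  | succ m ih => rw [sumRange, toPoly_add, ih, sum_range_succ]

theorem coeff_toPoly (l : List ℚ) (i : ℕ) : (toPoly l).coeff i = (l.getD i 0 : ℝ) := by
  induction l generalizing i with
  | nil => simp
  | cons a l ih => cases i <;> simp [coeff_C, ih]

theorem toPoly_mem_nonnegCoeffs {l : List ℚ} (hl : ∀ x ∈ l, 0 ≤ x) :
    toPoly l ∈ nonnegCoeffs ℝ := fun i => by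
  rw [coeff_toPoly, List.getD_eq_getElem?_getD]
  cases h : l[i]? with
  | none => simp
  | some x => exact_mod_cast hl x (List.mem_of_getElem? h)

end CoeffList

open CoeffList

def shiftedPTable (c : ℚ) : ℕ → List (List ℚ)
  | 0 => [[1]]
  | n + 1 =>
    smul (n + 1 : ℚ)⁻¹ (mul [c, 1] (sumRange
      (fun k => smul (σ 1 (k + 1)) ((shiftedPTable c n).getD k [])) (n + 1))) :: shiftedPTable c n

def shiftedPList (c : ℚ) (n : ℕ) : List ℚ := (shiftedPTable c n).getD 0 []

def shiftedΔList (c : ℚ) (a b : ℕ) : List ℚ :=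
  add (mul (shiftedPList c (a - 1)) (shiftedPList c (b + 1)))
    (smul (-1) (mul (shiftedPList c a) (shiftedPList c b)))

def comparisonList (c : ℚ) (b : ℕ) : List ℚ := mul (pow [c, 1] (b + 1)) (shiftedPList c b)

theorem toPoly_linear (c : ℚ) : toPoly [c, 1] = X + C (c : ℝ) := by
  simp only [toPoly_cons, toPoly_nil, Rat.cast_one, C_1, mul_zero]
  ring

theorem toPoly_getD_shiftedPTable (c : ℚ) (n : ℕ) :
    ∀ k ≤ n, toPoly ((shiftedPTable c n).getD k []) = shiftedP c (n - k) := by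
  induction n with
  | zero => intro k hk; simp [Nat.le_zero.1 hk, shiftedPTable, shiftedP_zero]
  | succ n ih =>
    rintro (_ | k) hk
    · rw [shiftedPTable, List.getD_cons_zero, toPoly_smul, toPoly_mul, toPoly_linear,
        toPoly_sumRange, Nat.sub_zero, shiftedP_succ]
      push_cast
      congr 2
      refine sum_congr rfl fun k hk => ?_
      rw [toPoly_smul, ih k (by rw [mem_range] at hk; omega), Rat.cast_natCast, C_eq_natCast]
    · rw [shiftedPTable, List.getD_cons_succ, ih k (by omega), Nat.add_sub_add_right]

theorem toPoly_shiftedPList (c : ℚ) (n : ℕ) : toPoly (shiftedPList c n) = shiftedP c n :=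
  toPoly_getD_shiftedPTable c n 0 n.zero_le

theorem toPoly_shiftedΔList (c : ℚ) (a b : ℕ) : toPoly (shiftedΔList c a b) = shiftedΔ c a b := by
  simp only [shiftedΔList, toPoly_add, toPoly_smul, toPoly_mul, toPoly_shiftedPList, shiftedΔ_eq,
    Rat.cast_neg, Rat.cast_one, map_neg, C_1]
  ring

theorem toPoly_comparisonList (c : ℚ) (b : ℕ) :
    toPoly (comparisonList c b) = comparisonPoly c b := by
  rw [comparisonList, toPoly_mul, toPoly_pow, toPoly_linear, toPoly_shiftedPList, comparisonPoly]

section SigmaBounds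

theorem le_sigma_one (n : ℕ) : n ≤ σ 1 n := by
  rcases n.eq_zero_or_pos with rfl | hn
  · exact Nat.zero_le _
  · rw [sigma_one_apply]
    exact single_le_sum (f := fun d => d) (fun _ _ => Nat.zero_le _)
      (Nat.mem_divisors_self n hn.ne')

theorem two_mul_le_of_mem_properDivisors {d n : ℕ} (hd : d ∈ n.properDivisors) : 2 * d ≤ n := by
  obtain ⟨⟨k, rfl⟩, hlt⟩ := Nat.mem_properDivisors.1 hd
  rcases k with _ | _ | k
  · simp at hlt
  · simp at hlt
  · nlinarith

theorem eight_mul_sigma_one_le (n : ℕ) : 8 * σ 1 n ≤ n ^ 2 + 10 * n := by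
  have hsub : n.properDivisors ⊆ range (n / 2 + 1) := fun d hd => by
    have := two_mul_le_of_mem_properDivisors hd
    rw [mem_range]; omega
  have hsum : (∑ d ∈ range (n / 2 + 1), d) * 2 = (n / 2 + 1) * (n / 2) := by
    rw [sum_range_id_mul_two, Nat.add_sub_cancel]
  have hle := sum_le_sum_of_subset hsub (f := fun d => d)
  have hq : 2 * (n / 2) ≤ n := Nat.mul_div_le n 2
  rw [sigma_one_apply, Nat.sum_divisors_eq_sum_properDivisors_add_self]
  have hq2 := Nat.mul_le_mul hq (Nat.add_le_add_right hq 2)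
  nlinarith

theorem sum_range_succ_mul_sub (x : ℝ) (K : ℕ) :
    6 * ∑ k ∈ range K, ((k : ℝ) + 1) * (x - k) = K * (K + 1) * (3 * x + 2 - 2 * K) := by
  induction K with
  | zero => simp
  | succ K ih => rw [sum_range_succ, mul_add, ih]; push_cast; ring

theorem sigma_sum_le_of_cubic {r κ : ℝ} {b M n : ℕ} (hr : 0 ≤ r) (hκ : 0 ≤ κ) (hbn : b ≤ n)
    (hMn : M ≤ n)
    (h : κ * b * (n ^ 2 + 10 * n) + ((n + 1) ^ 2 + 10 * (n + 1)) + 8 * r * (n + 1) ^ 2 ≤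
      4 / 3 * r * (n - M) * (n - M + 1) * (n + 2 + 2 * M)) :
    κ * ∑ k ∈ Ico (n - b) n, (σ 1 (k + 1) : ℝ) + σ 1 (n + 1) + r * (n + 1) ^ 2 ≤
      r * ∑ k ∈ range (n - M), (σ 1 (k + 1) : ℝ) * (n - k : ℕ) := by
  have hsmall : 8 * ∑ k ∈ Ico (n - b) n, (σ 1 (k + 1) : ℝ) ≤ b * (n ^ 2 + 10 * n) := by
    rw [mul_sum]
    refine (sum_le_card_nsmul _ _ ((n : ℝ) ^ 2 + 10 * n) fun k hk => ?_).trans_eq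
      (by rw [Nat.card_Ico, Nat.sub_sub_self hbn, nsmul_eq_mul])
    have hk : k + 1 ≤ n := by rw [mem_Ico] at hk; omega
    have h8 := eight_mul_sigma_one_le (k + 1)
    have : ((k + 1 : ℕ) : ℝ) ≤ n := by exact_mod_cast hk
    have : (0 : ℝ) ≤ (k + 1 : ℕ) := by positivity
    calc 8 * (σ 1 (k + 1) : ℝ) ≤ ((k + 1 : ℕ) : ℝ) ^ 2 + 10 * (k + 1 : ℕ) := by exact_mod_cast h8
      _ ≤ n ^ 2 + 10 * n := by nlinarith
  have hlast : 8 * (σ 1 (n + 1) : ℝ) ≤ (n + 1) ^ 2 + 10 * (n + 1) := by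
    exact_mod_cast eight_mul_sigma_one_le (n + 1)
  have hlarge : (n - M) * (n - M + 1) * (n + 2 + 2 * M) ≤
      6 * ∑ k ∈ range (n - M), (σ 1 (k + 1) : ℝ) * (n - k : ℕ) := by
    have h6 := sum_range_succ_mul_sub n (n - M)
    rw [Nat.cast_sub hMn] at h6
    calc ((n : ℝ) - M) * (n - M + 1) * (n + 2 + 2 * M)
        = 6 * ∑ k ∈ range (n - M), ((k : ℝ) + 1) * (n - k) := by rw [h6]; ring
      _ ≤ 6 * ∑ k ∈ range (n - M), (σ 1 (k + 1) : ℝ) * (n - k : ℕ) := by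
        refine mul_le_mul_of_nonneg_left (sum_le_sum fun k hk => ?_) (by norm_num)
        have hkn : k ≤ n := by rw [mem_range] at hk; omega
        rw [Nat.cast_sub hkn]
        refine mul_le_mul_of_nonneg_right (by exact_mod_cast le_sigma_one (k + 1)) ?_
        rw [sub_nonneg]; exact_mod_cast hkn
  nlinarith [mul_le_mul_of_nonneg_left hsmall hκ, mul_le_mul_of_nonneg_left hlarge hr]

end SigmaBounds

def BaseCases (c : ℚ) (b M A : ℕ) (r κ : ℚ) : Prop :=
  1 ≤ c ∧ 0 < r ∧ 0 ≤ κ ∧ b ≤ M ∧ M ≤ A ∧ 0 < (comparisonList c b).getD 1 0 ∧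
  (∀ a ∈ Icc 1 b, ∀ x ∈ add (shiftedΔList c a b) (smul κ (comparisonList c b)), 0 ≤ x) ∧
  (∀ a ∈ Ioc b M, ∀ x ∈ shiftedΔList c a b, 0 ≤ x) ∧
  (∀ a ∈ Ioc (b + 1) M, 0 < (shiftedΔList c a b).getD 1 0) ∧
  (∀ a ∈ Ioc M A, ∀ x ∈ add (shiftedΔList c a b) (smul (-(r * a)) (comparisonList c b)), 0 ≤ x)

instance (c : ℚ) (b M A : ℕ) (r κ : ℚ) : Decidable (BaseCases c b M A r κ) := by
  unfold BaseCases; infer_instance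

theorem shiftedΔ_mem_nonnegCoeffs_of_baseCases {c r κ : ℚ} {b M A : ℕ}
    (hbase : BaseCases c b M A r κ)
    (hcubic : ∀ t : ℝ, A ≤ t → (κ : ℝ) * b * (t ^ 2 + 10 * t) + ((t + 1) ^ 2 + 10 * (t + 1))
      + 8 * r * (t + 1) ^ 2 ≤ 4 / 3 * r * (t - M) * (t - M + 1) * (t + 2 + 2 * M))
    {a : ℕ} (ha : b + 2 ≤ a) :
    shiftedΔ c a b ∈ nonnegCoeffs ℝ ∧ 0 < (shiftedΔ c a b).coeff 1 := by
  obtain ⟨hc, hr, hκ, hbM, hMA, hU, hsmall, hmid, hmid₁, hlarge⟩ := hbase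
  rcases le_or_gt a M with haM | hMa
  · rw [← toPoly_shiftedΔList, coeff_toPoly]
    exact ⟨toPoly_mem_nonnegCoeffs (hmid a (mem_Ioc.2 ⟨by omega, haM⟩)),
      by exact_mod_cast hmid₁ a (mem_Ioc.2 ⟨by omega, haM⟩)⟩
  have hc' : (1 : ℝ) ≤ c := by exact_mod_cast hc
  have hr' : (0 : ℝ) < r := by exact_mod_cast hr
  have hσ (n : ℕ) (hn : n ≥ A) := sigma_sum_le_of_cubic hr'.le (by exact_mod_cast hκ)
    (by omega) (by omega) (hcubic n (by exact_mod_cast hn))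
  have h := shiftedΔ_sub_mem_nonnegCoeffs_of_base hc' hr'.le hbM hσ
    (fun a ha => by
      simpa [toPoly_shiftedΔList, toPoly_comparisonList] using
        toPoly_mem_nonnegCoeffs (hsmall a ha))
    (fun a ha => by simpa [toPoly_shiftedΔList] using toPoly_mem_nonnegCoeffs (hmid a ha))
    (fun a ha => by
      simpa [toPoly_shiftedΔList, toPoly_comparisonList, sub_eq_add_neg] using
        toPoly_mem_nonnegCoeffs (hlarge a ha)) a hMa
  have hU' : 0 < (comparisonPoly c b).coeff 1 := by
    rw [← toPoly_comparisonList, coeff_toPoly]; exact_mod_cast hU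
  have hrU : C ((r : ℝ) * a) * comparisonPoly c b ∈ nonnegCoeffs ℝ :=
    mul_mem (C_mem_nonnegCoeffs (by positivity)) (comparisonPoly_mem_nonnegCoeffs (by linarith) b)
  refine ⟨by simpa using add_mem h hrU, ?_⟩
  have h₁ := h 1
  rw [coeff_sub, coeff_C_mul] at h₁
  have : (0 : ℝ) < r * a * (comparisonPoly c b).coeff 1 := by
    have : (0 : ℝ) < a := by exact_mod_cast (show 0 < a by omega)
    positivity
  linarith

theorem derivative_Δ_eval_pos_of_baseCases {c r κ : ℚ} {b M A : ℕ}
    (hbase : BaseCases c b M A r κ)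
    (hcubic : ∀ t : ℝ, A ≤ t → (κ : ℝ) * b * (t ^ 2 + 10 * t) + ((t + 1) ^ 2 + 10 * (t + 1))
      + 8 * r * (t + 1) ^ 2 ≤ 4 / 3 * r * (t - M) * (t - M + 1) * (t + 2 + 2 * M))
    {a : ℕ} (ha : b + 2 ≤ a) {x : ℝ} (hx : c ≤ x) : 0 < (derivative (Δ a b)).eval x :=
  let ⟨hmem, h₁⟩ := shiftedΔ_mem_nonnegCoeffs_of_baseCases hbase hcubic ha
  derivative_eval_pos_of_comp_X_add_C hmem h₁ hx

theorem stmt1 (b : ℕ) (hb : b = 1 ∨ b = 2 ∨ b = 3) (x₀ : ℝ)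
    (hx₀ : x₀ = if Odd b then 1 else 2) (a : ℕ) (ha : b + 2 ≤ a)
    (x : ℝ) (hx : x₀ < x) :
    0 < (Polynomial.derivative (Δ a b)).eval x := by
  rcases hb with rfl | rfl | rfl
  · refine derivative_Δ_eval_pos_of_baseCases (c := 1) (M := 4) (A := 12) (r := 1 / 2)
      (κ := 1 / 6) (by decide +kernel) (fun t ht => ?_) ha (by norm_num [hx₀] at hx ⊢; linarith)
    have ht' := sub_nonneg.2 ht
    push_cast at ht' ⊢
    nlinarith [mul_nonneg (mul_nonneg ht' ht') ht']
  · refine derivative_Δ_eval_pos_of_baseCases (c := 2) (M := 6) (A := 16) (r := 1 / 3)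
      (κ := 1 / 8) (by decide +kernel) (fun t ht => ?_) ha (by norm_num [hx₀] at hx ⊢; linarith)
    have ht' := sub_nonneg.2 ht
    push_cast at ht' ⊢
    nlinarith [mul_nonneg (mul_nonneg ht' ht') ht']
  · refine derivative_Δ_eval_pos_of_baseCases (c := 1) (M := 8) (A := 19) (r := 2 / 5)
      (κ := 1 / 3) (by decide +kernel) (fun t ht => ?_) ha (by norm_num [hx₀] at hx ⊢; linarith)
    have ht' := sub_nonneg.2 ht
    push_cast at ht' ⊢
    nlinarith [mul_nonneg (mul_nonneg ht' ht') ht']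
end

section
/- For every integer a > 2 and every real number x > 2 one has Δ_{a,0}(x) = P_{a−1}(x)·P_1(x) − P_a(x) > 0. -/
open Polynomial Finset

/-- `s k` is the sum of divisors of `k`. -/
def s (k : ℕ) : ℕ := ∑ d ∈ k.divisors, d

noncomputable def pe (x : ℝ) (n : ℕ) : ℝ := (P n).eval x

lemma pe0 (x : ℝ) : pe x 0 = 1 := by simp [pe, P]

lemma L1 (x : ℝ) (n : ℕ) : ((n:ℝ)+1) * pe x (n+1)
    = x * ∑ k ∈ Finset.range (n+1), (s (k+1) : ℝ) * pe x (n - k) := by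
  have h : ((n:ℝ)+1) ≠ 0 := by positivity
  simp only [pe, P, eval_smul, eval_mul, eval_X, eval_finset_sum, eval_smul, smul_eq_mul]
  rw [← mul_assoc, mul_inv_cancel₀ h, one_mul]
  simp [s, mul_comm]

lemma pe1 (x : ℝ) : pe x 1 = x := by
  have := L1 x 0
  have hs : s 1 = 1 := by decide
  simp [hs, pe0] at this
  linarith

lemma s_pos (k : ℕ) (hk : 1 ≤ k) : 1 ≤ s k := by
  have : 1 ∈ k.divisors := Nat.one_mem_divisors.mpr (by omega)
  exact le_trans (by norm_num) (Finset.single_le_sum (f := id) (fun i _ => Nat.zero_le i) this)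

lemma ident2 (x : ℝ) (n : ℕ) :
    ((n:ℝ)+1) * (pe x (n+1) - pe x n)
      = (x * s (n+1) - 1) + ∑ m ∈ Finset.range n, (x * s (n-m) - 1) * (pe x (m+1) - pe x m) := by
  have h1 := L1 x n
  have htel : pe x n = 1 + ∑ m ∈ Finset.range n, (pe x (m+1) - pe x m) := by
    rw [Finset.sum_range_sub (f := fun m => pe x m), pe0]; ring
  rcases Nat.eq_zero_or_pos n with rfl | hn
  · have hs : s 1 = 1 := by decide
    simp [hs, pe0] at h1 ⊢
    linarith
  · obtain ⟨n', rfl⟩ : ∃ n', n = n' + 1 := ⟨n - 1, by omega⟩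
    have h2 := L1 x n'
    rw [Finset.sum_range_succ] at h1
    have hrefl : ∑ k ∈ Finset.range (n'+1), (s (k+1) : ℝ) * (pe x (n'+1-k) - pe x (n'-k))
        = ∑ m ∈ Finset.range (n'+1), (s (n'+1-m) : ℝ) * (pe x (m+1) - pe x m) := by
      have hr := Finset.sum_range_reflect
        (fun k => (s (k+1):ℝ) * (pe x (n'+1-k) - pe x (n'-k))) (n'+1)
      rw [← hr]
      apply Finset.sum_congr rfl
      intro m hm
      simp only [Finset.mem_range] at hm
      have e1 : n' + 1 - 1 - m + 1 = n' + 1 - m := by omega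
      have e2 : n' + 1 - (n' + 1 - 1 - m) = m + 1 := by omega
      have e3 : n' - (n' + 1 - 1 - m) = m := by omega
      rw [e1, e2, e3]
    have hd : ∑ k ∈ Finset.range (n'+1), (s (k+1) : ℝ) * pe x (n'+1 - k)
        = ∑ k ∈ Finset.range (n'+1), (s (k+1) : ℝ) * pe x (n' - k)
        + ∑ m ∈ Finset.range (n'+1), (s (n'+1-m) : ℝ) * (pe x (m+1) - pe x m) := by
      rw [← hrefl, ← Finset.sum_add_distrib]
      apply Finset.sum_congr rfl
      intro k hk; ring
    rw [hd] at h1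
    simp only [Nat.sub_self, pe0, mul_one] at h1
    have hsum3 : ∑ m ∈ Finset.range (n'+1), (x * (s (n'+1-m):ℝ) - 1) * (pe x (m+1) - pe x m)
        = x * ∑ m ∈ Finset.range (n'+1), (s (n'+1-m):ℝ) * (pe x (m+1) - pe x m)
          - ∑ m ∈ Finset.range (n'+1), (pe x (m+1) - pe x m) := by
      rw [Finset.mul_sum, ← Finset.sum_sub_distrib]
      apply Finset.sum_congr rfl; intros; ring
    rw [hsum3]
    rw [mul_add, mul_add] at h1
    push_cast at h1 h2 ⊢
    linarith [h1, h2, htel]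

lemma pe_mono_succ (x : ℝ) (hx : 1 ≤ x) : ∀ n, pe x n ≤ pe x (n+1) := by
  intro n
  induction n using Nat.strong_induction_on with
  | _ n ih =>
    have key := ident2 x n
    have h1 : (0:ℝ) ≤ x * s (n+1) - 1 := by
      have h := s_pos (n+1) (by omega)
      have : (1:ℝ) ≤ (s (n+1) : ℝ) := by exact_mod_cast h
      nlinarith
    have h2 : (0:ℝ) ≤ ∑ m ∈ Finset.range n, (x * s (n-m) - 1) * (pe x (m+1) - pe x m) := by
      apply Finset.sum_nonneg
      intro m hm
      simp only [Finset.mem_range] at hm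
      have hs : (1:ℝ) ≤ (s (n-m) : ℝ) := by exact_mod_cast s_pos (n-m) (by omega)
      have hd : 0 ≤ pe x (m+1) - pe x m := by linarith [ih m hm]
      have : (0:ℝ) ≤ x * s (n-m) - 1 := by nlinarith
      exact mul_nonneg this hd
    have hpos : (0:ℝ) < (n:ℝ) + 1 := by positivity
    nlinarith [key]

lemma pe_mono (x : ℝ) (hx : 1 ≤ x) : Monotone (pe x) :=
  monotone_nat_of_le_succ (pe_mono_succ x hx)

lemma pe_ge_one (x : ℝ) (hx : 1 ≤ x) (n : ℕ) : 1 ≤ pe x n := by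
  have := pe_mono x hx (Nat.zero_le n)
  rw [pe0] at this; exact this

lemma pe_pos (x : ℝ) (hx : 1 ≤ x) (n : ℕ) : 0 < pe x n :=
  lt_of_lt_of_le one_pos (pe_ge_one x hx n)

lemma L3 (x : ℝ) (m : ℕ) :
    ((m:ℝ)+2) * (x * pe x (m+1) - pe x (m+2))
      = x * ∑ k ∈ Finset.range (m+1), ((x * s (k+1) - s (k+2)) * pe x (m-k)) := by
  have h1 := L1 x (m+1)
  have h2 := L1 x m
  rw [Finset.sum_range_succ'] at h1
  simp only [Nat.add_sub_add_right, Nat.sub_zero] at h1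
  have hs : s (0+1) = 1 := by decide
  rw [hs] at h1
  have hexp : ∑ k ∈ Finset.range (m+1), ((x * s (k+1) - s (k+2)) * pe x (m-k))
      = x * (∑ k ∈ Finset.range (m+1), (s (k+1) : ℝ) * pe x (m-k))
        - ∑ k ∈ Finset.range (m+1), (s (k+2) : ℝ) * pe x (m-k) := by
    rw [Finset.mul_sum, ← Finset.sum_sub_distrib]
    apply Finset.sum_congr rfl; intros; ring
  rw [hexp, ← h2]
  push_cast at h1 ⊢
  linear_combination -h1

lemma sLB (k : ℕ) (hk : 2 ≤ k) : k + 1 ≤ s k := by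
  have hsub : ({1, k} : Finset ℕ) ⊆ k.divisors := by
    intro d hd
    simp only [Finset.mem_insert, Finset.mem_singleton] at hd
    rcases hd with rfl | rfl
    · exact Nat.one_mem_divisors.mpr (by omega)
    · exact Nat.mem_divisors_self _ (by omega)
  have hpair : ∑ d ∈ ({1, k} : Finset ℕ), d = 1 + k := by
    rw [Finset.sum_pair (by omega)]
  calc k + 1 = ∑ d ∈ ({1, k} : Finset ℕ), d := by omega
    _ ≤ s k := Finset.sum_le_sum_of_subset hsub

lemma sUB (n : ℕ) (hn : 1 ≤ n) :
    ∃ ps q, s n = n + ps ∧ 2 * ps ≤ q * (q + 1) ∧ 2 * q ≤ n := by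
  refine ⟨∑ d ∈ n.properDivisors, d, n / 2, ?_, ?_, ?_⟩
  · have := Nat.sum_divisors_eq_sum_properDivisors_add_self (n := n)
    simp [s]; omega
  · have hsub : n.properDivisors ⊆ Finset.range (n / 2 + 1) := by
      intro d hd
      rw [Nat.mem_properDivisors] at hd
      obtain ⟨⟨e, he⟩, hlt⟩ := hd
      have he2 : 2 ≤ e := by
        rcases Nat.lt_or_ge e 2 with h | h
        · interval_cases e <;> omega
        · exact h
      have : 2 * d ≤ n := by nlinarith
      simp only [Finset.mem_range]
      omega
    have h1 : ∑ d ∈ n.properDivisors, d ≤ ∑ d ∈ Finset.range (n/2 + 1), d :=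
      Finset.sum_le_sum_of_subset hsub
    have h2 : (∑ d ∈ Finset.range (n/2+1), d) * 2 = (n/2+1) * (n/2) :=
      Finset.sum_range_id_mul_two (n/2+1)
    have h3 : (n/2+1) * (n/2) = (n/2) * (n/2+1) := mul_comm _ _
    linarith
  · omega

lemma sigma_bound (N : ℕ) : s (N+3) ≤ 4 + ∑ j ∈ Finset.range N, s (j+3) := by
  rcases Nat.eq_zero_or_pos N with rfl | hN
  · simp; decide
  · obtain ⟨ps, q, h1, h2, h3⟩ := sUB (N+3) (by omega)
    have h4 : ∑ j ∈ Finset.range N, (j+4) ≤ ∑ j ∈ Finset.range N, s (j+3) :=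
      Finset.sum_le_sum (fun j _ => sLB (j+3) (by omega))
    have h5 : ∑ j ∈ Finset.range N, (j+4) = (∑ j ∈ Finset.range N, j) + 4*N := by
      rw [Finset.sum_add_distrib]; simp [Finset.sum_const, mul_comm]
    have h6 : (∑ j ∈ Finset.range N, j) * 2 = N * (N-1) := Finset.sum_range_id_mul_two N
    obtain ⟨M, rfl⟩ : ∃ M, N = M + 1 := ⟨N - 1, by omega⟩
    simp only [Nat.add_sub_cancel] at h6
    nlinarith [h1, h2, h3, h4, h5, h6]

lemma abel_aux (e b : ℕ → ℝ) (hb : ∀ i, b (i+1) ≤ b i) :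
    ∀ N, (∀ K, K ≤ N → 0 ≤ ∑ j ∈ Finset.range K, e j) →
      (∑ j ∈ Finset.range N, e j) * b N ≤ ∑ j ∈ Finset.range N, e j * b j := by
  intro N
  induction N with
  | zero => simp
  | succ N ih =>
    intro hE
    have ih' := ih (fun K hK => hE K (by omega))
    rw [Finset.sum_range_succ, Finset.sum_range_succ (f := fun j => e j * b j)]
    have hE1 : 0 ≤ ∑ j ∈ Finset.range (N+1), e j := hE (N+1) le_rfl
    have : (∑ j ∈ Finset.range (N+1), e j) * b (N+1)
        ≤ (∑ j ∈ Finset.range (N+1), e j) * b N :=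
      mul_le_mul_of_nonneg_left (hb N) hE1
    rw [Finset.sum_range_succ] at this hE1
    nlinarith [ih']

lemma Epos (x : ℝ) (hx : 2 < x) (K : ℕ) :
    0 ≤ ∑ j ∈ Finset.range K, (x * s (j+3) - s (j+4)) := by
  have htel : (∑ j ∈ Finset.range K, (s (j+4):ℝ)) + s 3
      = (∑ j ∈ Finset.range K, (s (j+3):ℝ)) + s (K+3) := by
    have a := Finset.sum_range_succ' (fun j => (s (j+3):ℝ)) K
    have b := Finset.sum_range_succ (fun j => (s (j+3):ℝ)) K
    linarith [a, b]
  have hsplit : ∑ j ∈ Finset.range K, (x * s (j+3) - s (j+4))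
      = x * (∑ j ∈ Finset.range K, (s (j+3):ℝ)) - ∑ j ∈ Finset.range K, (s (j+4):ℝ) := by
    rw [Finset.mul_sum, ← Finset.sum_sub_distrib]
  have hbnd : (s (K+3) : ℝ) ≤ 4 + ∑ j ∈ Finset.range K, (s (j+3):ℝ) := by
    have := sigma_bound K
    have hc : ((4 + ∑ j ∈ Finset.range K, s (j+3) : ℕ) : ℝ)
        = 4 + ∑ j ∈ Finset.range K, (s (j+3):ℝ) := by push_cast; ring
    calc (s (K+3) : ℝ) ≤ ((4 + ∑ j ∈ Finset.range K, s (j+3) : ℕ) : ℝ) := by exact_mod_cast this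
      _ = _ := hc
  have hnn : (0:ℝ) ≤ ∑ j ∈ Finset.range K, (s (j+3):ℝ) :=
    Finset.sum_nonneg (fun j _ => by positivity)
  have hs3 : (s 3 : ℝ) = 4 := by norm_num [show s 3 = 4 from by decide]
  rw [hsplit]
  nlinarith [htel, hbnd, hnn]

lemma key (x : ℝ) (hx : 2 < x) : ∀ n, 3 ≤ n → 0 < x * pe x (n-1) - pe x n := by
  intro n
  induction n using Nat.strong_induction_on with
  | _ n ih =>
    intro hn
    have hx1 : (1:ℝ) ≤ x := by linarith
    obtain ⟨m, rfl⟩ : ∃ m, n = m + 2 := ⟨n - 2, by omega⟩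
    have hm1 : 1 ≤ m := by omega
    show 0 < x * pe x (m+1) - pe x (m+2)
    have hid := L3 x m
    set S := ∑ k ∈ Finset.range (m+1), ((x * s (k+1) - s (k+2)) * pe x (m-k)) with hS
    have hs1 : s 1 = 1 := by decide
    have hs2 : s 2 = 3 := by decide
    have hs3 : s 3 = 4 := by decide
    have hSpos : 0 < S := by
      rcases Nat.lt_or_ge m 3 with hm3 | hm3
      · interval_cases m
        · -- m = 1
          rw [hS]
          rw [Finset.sum_range_succ, Finset.sum_range_succ, Finset.sum_range_zero]
          simp only [hs1, hs2, hs3, Nat.sub_self, Nat.sub_zero, pe0, pe1]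
          push_cast
          nlinarith [mul_pos (sub_pos.mpr hx) (show (0:ℝ) < x + 2 by linarith)]
        · -- m = 2
          have hpe2 : 2 * pe x 2 = x * (x + 3) := by
            have := L1 x 1
            rw [Finset.sum_range_succ, Finset.sum_range_succ, Finset.sum_range_zero] at this
            simp only [hs1, hs2, Nat.sub_self, Nat.sub_zero, pe0, pe1] at this
            push_cast at this
            linarith
          rw [hS]
          rw [Finset.sum_range_succ, Finset.sum_range_succ, Finset.sum_range_succ,
            Finset.sum_range_zero]
          simp only [hs1, hs2, hs3, show s 4 = 7 from by decide, Nat.sub_self, Nat.sub_zero,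
            pe0, pe1]
          have hpe2' : pe x 2 = x*(x+3)/2 := by linarith
          rw [hpe2', pe1]
          push_cast
          nlinarith [mul_pos (sub_pos.mpr hx) (show (0:ℝ) < x*x+8*x+7 by nlinarith)]
      · -- m ≥ 3 : peel two terms
        have hpeel : S = (∑ j ∈ Finset.range (m-1),
              (x * s (j+3) - s (j+4)) * pe x (m-(j+2)))
            + (x * s 2 - s 3) * pe x (m-1) + (x * s 1 - s 2) * pe x m := by
          rw [hS]
          obtain ⟨m', rfl⟩ : ∃ m', m = m' + 2 := ⟨m - 2, by omega⟩
          rw [Finset.sum_range_succ' (fun k => (x * s (k+1) - s (k+2)) * pe x (m'+2-k)) (m'+2)]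
          rw [Finset.sum_range_succ' (fun k => (x * s (k+1+1) - s (k+1+2)) * pe x (m'+2-(k+1))) (m'+1)]
          rfl
        have htail : 0 ≤ ∑ j ∈ Finset.range (m-1),
            (x * s (j+3) - s (j+4)) * pe x (m-(j+2)) := by
          have hb : ∀ i, pe x (m-(i+1+2)) ≤ pe x (m-(i+2)) :=
            fun i => pe_mono x hx1 (Nat.sub_le_sub_left (by omega) m)
          have := abel_aux (fun j => x * s (j+3) - s (j+4)) (fun j => pe x (m-(j+2))) hb
            (m-1) (fun K _ => Epos x hx K)
          have hEnn : 0 ≤ ∑ j ∈ Finset.range (m-1), (x * s (j+3) - s (j+4)) :=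
            Epos x hx (m-1)
          have hbnn : 0 ≤ pe x (m-(m-1+2)) := le_of_lt (pe_pos x hx1 _)
          nlinarith [this]
        have hpem1 : (0:ℝ) < pe x (m-1) := pe_pos x hx1 _
        have hhead : 0 < (x * s 2 - s 3) * pe x (m-1) + (x * s 1 - s 2) * pe x m := by
          rw [hs1, hs2, hs3]
          push_cast
          rcases le_or_gt 3 x with h3 | h3
          · have : 0 ≤ (x * 1 - 3) * pe x m :=
              mul_nonneg (by linarith) (le_of_lt (pe_pos x hx1 m))
            nlinarith [hpem1, this, mul_pos (show (0:ℝ) < x*3-4 by linarith) hpem1]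
          · -- x < 3 : use IH at m
            have hIH := ih m (by omega) (by omega)
            have hm' : pe x m ≤ x * pe x (m-1) := by linarith
            have : (x * 1 - 3) * pe x m ≥ (x * 1 - 3) * (x * pe x (m-1)) := by
              apply mul_le_mul_of_nonpos_left hm'
              linarith
            have h4 : 0 < (x*x - 4) * pe x (m-1) :=
              mul_pos (by nlinarith) hpem1
            linarith [this, h4]
        linarith [hpeel, htail, hhead]
    have hm2 : (0:ℝ) < (m:ℝ) + 2 := by positivity
    nlinarith [hid, hSpos]

theorem stmt2 (a : ℕ) (ha : 2 < a) (x : ℝ) (hx : 2 < x) :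
    0 < (P (a - 1)).eval x * (P 1).eval x - (P a).eval x := by
  have h := key x hx a (by omega)
  have h1 : (P 1).eval x = x := pe1 x
  have h2 : (P (a-1)).eval x = pe x (a-1) := rfl
  have h3 : (P a).eval x = pe x a := rfl
  rw [h1, h2, h3]
  linarith [h]
end

section
/- One has Δ_{2,0}(3) = 0 and Δ_{2,0}(x) > 0 for every real x > 3; moreover Δ_{3,0}(2) = Δ_{4,0}(2) = 0; and for every integer a > 4 and every real x ≥ 2 one has Δ_{a,0}(x) > 0. -/
open Polynomial Finset

def sig (n : ℕ) : ℕ := ∑ d ∈ n.divisors, d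

noncomputable def p (x : ℝ) (n : ℕ) : ℝ := (P n).eval x

lemma p_zero (x : ℝ) : p x 0 = 1 := by simp [p, P]

lemma sig1 : sig 1 = 1 := by decide
lemma sig2 : sig 2 = 3 := by decide
lemma sig3 : sig 3 = 4 := by decide
lemma sig4 : sig 4 = 7 := by decide
lemma sig5 : sig 5 = 6 := by decide
lemma sig6 : sig 6 = 12 := by decide
lemma sig7 : sig 7 = 8 := by decide

lemma p_rec (x : ℝ) (n : ℕ) :
    ((n : ℝ) + 1) * p x (n + 1)
      = x * ∑ k ∈ range (n + 1), (sig (k + 1) : ℝ) * p x (n - k) := by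
  have hne : ((n : ℝ) + 1) ≠ 0 := by positivity
  simp only [p, P, eval_smul, eval_mul, eval_X, eval_finset_sum, smul_eq_mul, sig]
  rw [← mul_assoc, mul_inv_cancel₀ hne, one_mul]

lemma p_rec' (x : ℝ) (n : ℕ) :
    (n : ℝ) * p x n = x * ∑ k ∈ range n, (sig (k + 1) : ℝ) * p x (n - 1 - k) := by
  cases n with
  | zero => simp
  | succ n =>
    have := p_rec x n
    push_cast
    simpa using this

lemma one_le_sig (n : ℕ) : 1 ≤ sig (n + 1) := by
  have h1 : (1 : ℕ) ∈ (n+1).divisors := Nat.one_mem_divisors.2 (Nat.succ_ne_zero n)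
  exact Finset.single_le_sum (f := fun d => d) (fun i _ => Nat.zero_le i) h1

lemma self_le_sig (n : ℕ) : n + 1 ≤ sig (n + 1) := by
  have h1 : (n+1 : ℕ) ∈ (n+1).divisors := Nat.mem_divisors_self _ (Nat.succ_ne_zero n)
  exact Finset.single_le_sum (f := fun d => d) (fun i _ => Nat.zero_le i) h1

lemma sig_half (n : ℕ) :
    sig (n + 1) ≤ (n + 1) + ((n + 1) / 2) * ((n + 1) / 2) := by
  set m := n + 1 with hm
  have hm0 : m ≠ 0 := Nat.succ_ne_zero n
  have hsplit : sig m = ∑ d ∈ m.properDivisors, d + m :=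
    (Nat.sum_divisors_eq_sum_properDivisors_add_self).symm ▸ rfl
  have hsub : m.properDivisors ⊆ Finset.Icc 1 (m / 2) := by
    intro d hd
    rw [Nat.mem_properDivisors] at hd
    obtain ⟨⟨c, hc⟩, hlt⟩ := hd
    have hd0 : 0 < d := Nat.pos_of_mem_divisors (Nat.mem_divisors.2 ⟨⟨c, hc⟩, hm0⟩)
    have hc2 : 2 ≤ c := by
      rcases Nat.lt_or_ge c 2 with h | h
      · interval_cases c <;> omega
      · exact h
    have : d * 2 ≤ m := by calc d * 2 ≤ d * c := Nat.mul_le_mul_left d hc2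
                                _ = m := hc.symm
    refine Finset.mem_Icc.2 ⟨hd0, ?_⟩
    omega
  have h2 : ∑ d ∈ m.properDivisors, d ≤ ∑ d ∈ Finset.Icc 1 (m / 2), d :=
    Finset.sum_le_sum_of_subset hsub
  have h3 : ∑ d ∈ Finset.Icc 1 (m / 2), d ≤ (m / 2) * (m / 2) := by
    calc ∑ d ∈ Finset.Icc 1 (m / 2), d ≤ ∑ _d ∈ Finset.Icc 1 (m / 2), (m/2) :=
          Finset.sum_le_sum (fun i hi => (Finset.mem_Icc.1 hi).2)
      _ = (Finset.Icc 1 (m/2)).card * (m/2) := by rw [Finset.sum_const, smul_eq_mul]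
      _ ≤ (m/2) * (m/2) := by
          have : (Finset.Icc 1 (m/2)).card ≤ m/2 := by rw [Nat.card_Icc]; omega
          exact Nat.mul_le_mul_right _ this
  have : sig m = ∑ d ∈ m.properDivisors, d + m := hsplit
  omega

noncomputable def d (x : ℝ) : ℕ → ℝ
  | 0 => 1
  | n + 1 => p x (n + 1) - p x n

lemma d_sum (x : ℝ) (n : ℕ) : ∑ j ∈ range (n + 1), d x j = p x n := by
  induction n with
  | zero => simp [d, p_zero]
  | succ n IH =>
    rw [Finset.sum_range_succ, IH]
    show p x n + (p x (n+1) - p x n) = p x (n+1)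
    ring

lemma d_id (x : ℝ) (m : ℕ) :
    ((m : ℝ) + 1) * d x (m + 1)
      = ∑ k ∈ range (m + 1), (x * sig (k + 1) - 1) * d x (m - k) := by
  have h1 := p_rec x m
  have h2 := p_rec' x m
  have e1 : ∑ k ∈ range (m + 1), (x * sig (k + 1) - 1) * d x (m - k)
      = x * (∑ k ∈ range (m + 1), (sig (k + 1) : ℝ) * d x (m - k))
        - ∑ k ∈ range (m + 1), d x (m - k) := by
    rw [Finset.mul_sum, ← Finset.sum_sub_distrib]
    exact Finset.sum_congr rfl (fun k _ => by ring)
  have e2 : ∑ k ∈ range (m + 1), d x (m - k) = p x m := by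
    rw [← d_sum x m]
    have := Finset.sum_range_reflect (d x) (m + 1)
    simpa using this
  have e3 : ∑ k ∈ range (m + 1), (sig (k + 1) : ℝ) * d x (m - k)
      = ∑ k ∈ range (m + 1), (sig (k + 1) : ℝ) * p x (m - k)
        - ∑ k ∈ range m, (sig (k + 1) : ℝ) * p x (m - 1 - k) := by
    rw [Finset.sum_range_succ, Finset.sum_range_succ]
    have hk : ∀ k ∈ range m, (sig (k + 1) : ℝ) * d x (m - k)
        = (sig (k + 1) : ℝ) * p x (m - k) - (sig (k + 1) : ℝ) * p x (m - 1 - k) := by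
      intro k hk
      have hk' : k < m := Finset.mem_range.1 hk
      have hmk : m - k = (m - 1 - k) + 1 := by omega
      rw [hmk]
      show (sig (k + 1) : ℝ) * (p x ((m-1-k) + 1) - p x (m-1-k)) = _
      ring
    rw [Finset.sum_congr rfl hk, Finset.sum_sub_distrib]
    have : m - m = 0 := by omega
    rw [this]
    show _ + (sig (m+1) : ℝ) * d x 0 = _
    simp only [d, p_zero]
    ring
  rw [e1, e3, e2]
  show ((m : ℝ) + 1) * (p x (m + 1) - p x m) = _
  linear_combination h1 - h2

lemma d_nonneg {x : ℝ} (hx : 1 ≤ x) : ∀ n, 0 ≤ d x n := by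
  intro n
  induction n using Nat.strong_induction_on with
  | _ n IH =>
    match n with
    | 0 => exact zero_le_one
    | m + 1 =>
      have hid := d_id x m
      have hs : 0 ≤ ∑ k ∈ range (m + 1), (x * sig (k + 1) - 1) * d x (m - k) := by
        refine Finset.sum_nonneg fun k _ => mul_nonneg ?_ (IH (m - k) (by omega))
        have h1 : (1 : ℝ) ≤ sig (k + 1) := by exact_mod_cast one_le_sig k
        nlinarith
      rw [← hid] at hs
      have hm : (0 : ℝ) < (m : ℝ) + 1 := by positivity
      nlinarith

lemma p_mono {x : ℝ} (hx : 1 ≤ x) : Monotone (p x) := by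
  apply monotone_nat_of_le_succ
  intro n
  have := d_nonneg hx (n + 1)
  have h : d x (n+1) = p x (n+1) - p x n := rfl
  linarith [h ▸ this]

lemma one_le_p {x : ℝ} (hx : 1 ≤ x) (n : ℕ) : 1 ≤ p x n := by
  have := p_mono hx (Nat.zero_le n)
  rw [p_zero] at this
  exact this

lemma p_nonneg {x : ℝ} (hx : 1 ≤ x) (n : ℕ) : 0 ≤ p x n :=
  le_trans zero_le_one (one_le_p hx n)

lemma abel (c f : ℕ → ℝ) (hf : ∀ i, f (i + 1) ≤ f i) (hf0 : ∀ i, 0 ≤ f i) :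
    ∀ N, (∀ J, J ≤ N → 0 ≤ ∑ j ∈ range J, c j) →
      (∑ j ∈ range N, c j) * f N ≤ ∑ j ∈ range N, c j * f j := by
  intro N
  induction N with
  | zero => simp
  | succ N IH =>
    intro h
    have IH' := IH (fun J hJ => h J (Nat.le_succ_of_le hJ))
    have hT : 0 ≤ ∑ j ∈ range (N + 1), c j := h (N + 1) le_rfl
    rw [Finset.sum_range_succ, Finset.sum_range_succ (f := fun j => c j * f j)]
    calc (∑ j ∈ range N, c j + c N) * f (N + 1)
        ≤ (∑ j ∈ range N, c j + c N) * f N := by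
          apply mul_le_mul_of_nonneg_left (hf N)
          rw [← Finset.sum_range_succ]; exact hT
      _ = (∑ j ∈ range N, c j) * f N + c N * f N := by ring
      _ ≤ (∑ j ∈ range N, c j * f j) + c N * f N := by linarith

lemma abel_nonneg (c f : ℕ → ℝ) (hf : ∀ i, f (i + 1) ≤ f i) (hf0 : ∀ i, 0 ≤ f i)
    (N : ℕ) (h : ∀ J, J ≤ N → 0 ≤ ∑ j ∈ range J, c j) :
    0 ≤ ∑ j ∈ range N, c j * f j :=
  le_trans (mul_nonneg (h N le_rfl) (hf0 N)) (abel c f hf hf0 N h)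

-- Gauss-type bound on sums of sig
lemma gauss (J : ℕ) : (∑ i ∈ range J, (i : ℝ)) = J * (J - 1) / 2 := by
  induction J with
  | zero => simp
  | succ J IH => rw [Finset.sum_range_succ, IH]; push_cast; ring

lemma sig_tail2 (J : ℕ) :
    (sig (J + 1) : ℝ) ≤ 1 + 2 * ∑ k ∈ range J, (sig (k + 1) : ℝ) := by
  match J with
  | 0 => simp [sig1]
  | (J + 1) =>
    have hb : (sig (J + 2) : ℝ) ≤ (J + 2 : ℝ) + ((J + 2) / 2 : ℕ) * ((J + 2) / 2 : ℕ) := by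
      exact_mod_cast sig_half (J + 1)
    have hh : 2 * ((J + 2) / 2 : ℕ) ≤ J + 2 := by omega
    have hh' : 2 * (((J + 2) / 2 : ℕ) : ℝ) ≤ (J : ℝ) + 2 := by exact_mod_cast hh
    have hsum : ((J:ℝ)+1) * J / 2 + (J + 1) ≤ ∑ k ∈ range (J + 1), (sig (k + 1) : ℝ) := by
      calc ((J:ℝ)+1) * J / 2 + (J + 1) = ∑ i ∈ range (J+1), ((i:ℝ) + 1) := by
            rw [Finset.sum_add_distrib, gauss (J+1), Finset.sum_const, Finset.card_range]
            push_cast; ring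
        _ ≤ _ := Finset.sum_le_sum fun i _ => by exact_mod_cast self_le_sig i
    set h := (((J + 2) / 2 : ℕ) : ℝ) with hdef
    have hh0 : (0:ℝ) ≤ h := by positivity
    push_cast
    push_cast at hb
    nlinarith [hsum, hb, hh']

lemma sig_tail5 (J : ℕ) :
    (sig (J + 5) : ℝ) ≤ 6 + ∑ i ∈ range J, (sig (i + 5) : ℝ) := by
  match J with
  | 0 => simp [sig5]
  | 1 => simp [sig6, sig5]; norm_num
  | 2 => rw [Finset.sum_range_succ, Finset.sum_range_succ]; simp [sig7, sig5, sig6]; norm_num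
  | (J + 3) =>
    have hb : (sig (J + 8) : ℝ) ≤ (J + 8 : ℝ) + ((J + 8) / 2 : ℕ) * ((J + 8) / 2 : ℕ) := by
      exact_mod_cast sig_half (J + 7)
    have hh : 2 * ((J + 8) / 2 : ℕ) ≤ J + 8 := by omega
    have hh' : 2 * (((J + 8) / 2 : ℕ) : ℝ) ≤ (J : ℝ) + 8 := by exact_mod_cast hh
    have hsum : ((J:ℝ)+3) * (J+2) / 2 + 5*(J + 3) ≤ ∑ i ∈ range (J + 3), (sig (i + 5) : ℝ) := by
      calc ((J:ℝ)+3) * (J+2) / 2 + 5*(J + 3) = ∑ i ∈ range (J+3), ((i:ℝ) + 5) := by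
            rw [Finset.sum_add_distrib, gauss (J+3), Finset.sum_const, Finset.card_range]
            push_cast; ring
        _ ≤ _ := Finset.sum_le_sum fun i _ => by exact_mod_cast self_le_sig (i + 4)
    set h := (((J + 8) / 2 : ℕ) : ℝ) with hdef
    have hh0 : (0:ℝ) ≤ h := by positivity
    push_cast at hb ⊢
    nlinarith [hsum, hb, hh']

lemma psum {x : ℝ} (hx : 2 ≤ x) (J : ℕ) :
    0 ≤ ∑ i ∈ range J, (x * sig (i + 5) - sig (i + 6)) := by
  have h1 : ∑ i ∈ range J, ((2:ℝ) * sig (i + 5) - sig (i + 6))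
      ≤ ∑ i ∈ range J, (x * sig (i + 5) - sig (i + 6)) := by
    refine Finset.sum_le_sum fun i _ => ?_
    have : (0:ℝ) ≤ (sig (i+5) : ℝ) := by positivity
    nlinarith
  have h2 : ∑ i ∈ range J, ((sig (i + 6)):ℝ)
      = ∑ i ∈ range J, ((sig (i + 5)):ℝ) + sig (J + 5) - sig 5 := by
    have := Finset.sum_range_succ' (fun i => ((sig (i + 5)):ℝ)) J
    have h3 := Finset.sum_range_succ (fun i => ((sig (i + 5)):ℝ)) J
    simp only [show ∀ i:ℕ, i + 1 + 5 = i + 6 from fun i => by omega] at this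
    rw [h3] at this
    linarith [this]
  have h4 := sig_tail5 J
  have h5 : (6:ℝ) = (sig 5 : ℝ) := by rw [sig5]; norm_num
  have h6 : ∑ i ∈ range J, ((2:ℝ) * sig (i + 5) - sig (i + 6)) ≥ 0 := by
    rw [Finset.sum_sub_distrib, h2]
    have : ∑ i ∈ range J, (2:ℝ) * (sig (i+5):ℝ) = 2 * ∑ i ∈ range J, ((sig (i+5)):ℝ) := by
      rw [Finset.mul_sum]
    rw [this]
    linarith
  linarith

-- identity for U = 3 p n - p (n+1)
lemma Uid (x : ℝ) (n : ℕ) :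
    ((n : ℝ) + 1) * (3 * p x n - p x (n + 1))
      = (3 - x) * p x n
        + x * ∑ k ∈ range n, ((3 * sig (k + 1) - sig (k + 2) : ℝ)) * p x (n - 1 - k) := by
  have h2 := p_rec' x n
  have h1 := p_rec x n
  rw [Finset.sum_range_succ'] at h1
  have hconv : ∑ k ∈ range n, (sig (k + 1 + 1) : ℝ) * p x (n - (k + 1))
      = ∑ k ∈ range n, (sig (k + 2) : ℝ) * p x (n - 1 - k) :=
    Finset.sum_congr rfl fun k _ => by rw [show n - (k + 1) = n - 1 - k by omega]
  rw [hconv, Nat.sub_zero, sig1] at h1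
  norm_num at h1
  have e : ∑ k ∈ range n, ((3 * sig (k + 1) - sig (k + 2) : ℝ)) * p x (n - 1 - k)
      = 3 * (∑ k ∈ range n, (sig (k + 1) : ℝ) * p x (n - 1 - k))
        - ∑ k ∈ range n, (sig (k + 1 + 1) : ℝ) * p x (n - 1 - k) := by
    rw [Finset.mul_sum, ← Finset.sum_sub_distrib]
    refine Finset.sum_congr rfl fun k _ => ?_
    have : k + 1 + 1 = k + 2 := rfl
    rw [this]; ring
  rw [e]
  linear_combination 3 * h2 - h1

lemma ratio {x : ℝ} (hx : 2 ≤ x) (hx3 : x ≤ 3) (n : ℕ) : p x (n + 1) ≤ 3 * p x n := by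
  have hx1 : (1:ℝ) ≤ x := by linarith
  have hid := Uid x n
  have htail : 0 ≤ ∑ k ∈ range n, ((3 * sig (k + 1) - sig (k + 2) : ℝ)) * p x (n - 1 - k) := by
    refine abel_nonneg _ _ (fun i => ?_) (fun i => p_nonneg hx1 _) n (fun J _ => ?_)
    · exact p_mono hx1 (by omega)
    · -- partial sums
      have h3 : ∑ k ∈ range J, ((sig (k + 2)):ℝ)
          = ∑ k ∈ range J, ((sig (k + 1)):ℝ) + sig (J + 1) - sig 1 := by
        have hs := Finset.sum_range_succ' (fun i => ((sig (i + 1)):ℝ)) J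
        have h4 := Finset.sum_range_succ (fun i => ((sig (i + 1)):ℝ)) J
        simp only [show ∀ i:ℕ, i + 1 + 1 = i + 2 from fun i => by omega] at hs
        rw [h4] at hs
        linarith [hs]
      have h5 := sig_tail2 J
      have e2 : ∑ k ∈ range J, ((3:ℝ) * sig (k + 1) - sig (k + 2))
          = 3 * ∑ k ∈ range J, ((sig (k+1)):ℝ) - ∑ k ∈ range J, ((sig (k+2)):ℝ) := by
        rw [Finset.sum_sub_distrib, Finset.mul_sum]
      rw [e2, h3, sig1]
      push_cast
      linarith
  have hn : (0:ℝ) ≤ (n:ℝ) + 1 := by positivity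
  have hrhs : 0 ≤ ((n : ℝ) + 1) * (3 * p x n - p x (n + 1)) := by
    rw [hid]
    have : 0 ≤ (3 - x) * p x n := mul_nonneg (by linarith) (p_nonneg hx1 n)
    nlinarith
  nlinarith [hrhs]

lemma Qid (x : ℝ) (m : ℕ) :
    ((m : ℝ) + 2) * (x * p x (m + 1) - p x (m + 2))
      = x * ∑ k ∈ range (m + 1), ((x * sig (k + 1) - sig (k + 2) : ℝ)) * p x (m - k) := by
  have h1 := p_rec x m
  have h2 := p_rec x (m + 1)
  rw [Finset.sum_range_succ'] at h2
  have hconv : ∑ k ∈ range (m + 1), (sig (k + 1 + 1) : ℝ) * p x (m + 1 - (k + 1))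
      = ∑ k ∈ range (m + 1), (sig (k + 2) : ℝ) * p x (m - k) :=
    Finset.sum_congr rfl fun k _ => by rw [show m + 1 - (k + 1) = m - k by omega]
  rw [hconv, Nat.sub_zero, sig1] at h2
  norm_num at h2
  push_cast at h2
  have e : ∑ k ∈ range (m + 1), ((x * sig (k + 1) - sig (k + 2) : ℝ)) * p x (m - k)
      = x * (∑ k ∈ range (m + 1), (sig (k + 1) : ℝ) * p x (m - k))
        - ∑ k ∈ range (m + 1), (sig (k + 2) : ℝ) * p x (m - k) := by
    rw [Finset.mul_sum, ← Finset.sum_sub_distrib]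
    exact Finset.sum_congr rfl fun k _ => by ring
  rw [e]
  linear_combination x * h1 - h2

lemma key_s3 {x : ℝ} (hx : 2 ≤ x) (b : ℕ) :
    0 < x * p x (b + 3 + 1) - p x (b + 3 + 2) := by
  have hx1 : (1:ℝ) ≤ x := by linarith
  set m := b + 3 with hm
  have hid := Qid x m
  -- split the sum
  have hsplit : ∑ k ∈ range (m + 1), ((x * sig (k + 1) - sig (k + 2) : ℝ)) * p x (m - k)
      = (∑ k ∈ range 4, ((x * sig (k + 1) - sig (k + 2) : ℝ)) * p x (m - k))
        + ∑ i ∈ range b, ((x * sig (i + 5) - sig (i + 6) : ℝ)) * p x (m - (4 + i)) := by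
    rw [show m + 1 = 4 + b by omega, Finset.sum_range_add]
    congr 1
    refine Finset.sum_congr rfl fun i _ => ?_
    rw [show 4 + i + 1 = i + 5 by omega, show 4 + i + 2 = i + 6 by omega]
  have htail : 0 ≤ ∑ i ∈ range b, ((x * sig (i + 5) - sig (i + 6) : ℝ)) * p x (m - (4 + i)) := by
    refine abel_nonneg _ _ (fun i => ?_) (fun i => p_nonneg hx1 _) b (fun J _ => psum hx J)
    exact p_mono hx1 (by omega)
  have hhead : ∑ k ∈ range 4, ((x * sig (k + 1) - sig (k + 2) : ℝ)) * p x (m - k)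
      = (x - 3) * p x (b + 3) + (3 * x - 4) * p x (b + 2)
        + (4 * x - 7) * p x (b + 1) + (7 * x - 6) * p x b := by
    rw [Finset.sum_range_succ, Finset.sum_range_succ, Finset.sum_range_succ,
      Finset.sum_range_succ, Finset.sum_range_zero]
    rw [show m - 0 = b + 3 by omega, show m - 1 = b + 2 by omega,
      show m - 2 = b + 1 by omega, show m - 3 = b by omega]
    rw [sig1, sig2, sig3, sig4, sig5]
    push_cast
    ring
  have hE : 0 < (x - 3) * p x (b + 3) + (3 * x - 4) * p x (b + 2)
        + (4 * x - 7) * p x (b + 1) + (7 * x - 6) * p x b := by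
    have hp0 : 1 ≤ p x b := one_le_p hx1 b
    have hp01 : p x b ≤ p x (b+1) := p_mono hx1 (by omega)
    have hp12 : p x (b+1) ≤ p x (b+2) := p_mono hx1 (by omega)
    have hp23 : p x (b+2) ≤ p x (b+3) := p_mono hx1 (by omega)
    rcases le_or_gt x 3 with hx3 | hx3
    · have r1 : p x (b + 3) ≤ 3 * p x (b + 2) := ratio hx hx3 (b + 2)
      have r2 : p x (b + 2) ≤ 3 * p x (b + 1) := ratio hx hx3 (b + 1)
      have r3 : p x (b + 1) ≤ 3 * p x b := ratio hx hx3 b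
      have hA : 0 ≤ (3 * x - 4) * (3 * p x (b + 2) - p x (b + 3)) :=
        mul_nonneg (by linarith) (by linarith)
      have hB : 0 ≤ (4 * x - 7) * (9 * p x (b + 1) - p x (b + 3)) :=
        mul_nonneg (by linarith) (by linarith)
      have hC : 0 ≤ (7 * x - 6) * (27 * p x b - p x (b + 3)) :=
        mul_nonneg (by linarith) (by linarith)
      have hD : (2:ℝ) ≤ (73 * x - 144) * p x (b + 3) := by
        have : (1:ℝ) ≤ p x (b+3) := one_le_p hx1 _
        nlinarith
      nlinarith [hA, hB, hC, hD]
    · have h1 : 0 ≤ (x - 3) * p x (b + 3) := mul_nonneg (by linarith) (p_nonneg hx1 _)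
      have h2 : 0 ≤ (3 * x - 4) * p x (b + 2) := mul_nonneg (by linarith) (p_nonneg hx1 _)
      have h3 : 0 ≤ (4 * x - 7) * p x (b + 1) := mul_nonneg (by linarith) (p_nonneg hx1 _)
      have h4 : (15:ℝ) ≤ (7 * x - 6) * p x b := by nlinarith
      linarith
  have hxpos : (0:ℝ) < x := by linarith
  have hQ : 0 < ((m : ℝ) + 2) * (x * p x (m + 1) - p x (m + 2)) := by
    rw [hid, hsplit, hhead]
    have := mul_nonneg hxpos.le htail
    nlinarith [hE, htail]
  have hm2 : (0:ℝ) < (m:ℝ) + 2 := by positivity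
  nlinarith [hQ, hm2]

lemma p_one (x : ℝ) : p x 1 = x := by
  have h := p_rec x 0
  rw [Finset.sum_range_one] at h
  simp [sig1, p_zero] at h
  linarith

lemma p_two (x : ℝ) : p x 2 = x * (x + 3) / 2 := by
  have h := p_rec x 1
  rw [Finset.sum_range_succ, Finset.sum_range_one] at h
  simp [sig1, sig2, p_zero, p_one] at h
  linarith

lemma p_three (x : ℝ) : p x 3 = x * (x ^ 2 + 9 * x + 8) / 6 := by
  have h := p_rec x 2
  rw [Finset.sum_range_succ, Finset.sum_range_succ, Finset.sum_range_one] at h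
  simp [sig1, sig2, sig3, p_zero, p_one, p_two] at h
  norm_num at h
  linarith

lemma p_four (x : ℝ) : p x 4 = (x ^ 4 + 18 * x ^ 3 + 59 * x ^ 2 + 42 * x) / 24 := by
  have h := p_rec x 3
  rw [Finset.sum_range_succ, Finset.sum_range_succ, Finset.sum_range_succ,
    Finset.sum_range_one] at h
  simp [sig1, sig2, sig3, sig4, p_zero, p_one, p_two, p_three] at h
  norm_num at h
  nlinarith [h]

lemma delta_eval (a : ℕ) (x : ℝ) :
    (Δ a 0).eval x = p x (a - 1) * x - p x a := by
  simp only [Δ, eval_sub, eval_mul, p]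
  rw [show (P 1).eval x = x from p_one x, show (P 0).eval x = 1 from p_zero x]
  ring

theorem stmt3 :
    (Δ 2 0).eval (3 : ℝ) = 0 ∧ (∀ x : ℝ, 3 < x → 0 < (Δ 2 0).eval x) ∧
    (Δ 3 0).eval (2 : ℝ) = 0 ∧ (Δ 4 0).eval (2 : ℝ) = 0 ∧
    ∀ a : ℕ, 4 < a → ∀ x : ℝ, 2 ≤ x → 0 < (Δ a 0).eval x := by
  refine ⟨?_, ?_, ?_, ?_, ?_⟩
  · rw [delta_eval]
    norm_num [p_one, p_two]
  · intro x hx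
    rw [delta_eval]
    norm_num [p_one, p_two]
    nlinarith
  · rw [delta_eval]
    norm_num [p_two, p_three]
  · rw [delta_eval]
    norm_num [p_three, p_four]
  · intro a ha x hx
    obtain ⟨b, rfl⟩ : ∃ b, a = b + 5 := ⟨a - 5, by omega⟩
    rw [delta_eval]
    have := key_s3 hx b
    have e1 : b + 5 - 1 = b + 3 + 1 := by omega
    have e2 : b + 5 = b + 3 + 2 := by omega
    rw [e1, e2]
    linarith
end

section
/- Let a and b be positive integers with a + b > 2, and let x be a real number with x > 2. Then P_a(x)·P_b(x) > P_{a+b}(x). -/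
open Polynomial Finset

/-!
Write `p n = P_n(x)` and use the recurrence as `n p n = x ∑_{j<n} σ(n - j) p j`. For `2 ≤ a ≤ b`,
split the recurrence for `p (a + b)` at `j = a`. By induction `p (a + i) ≤ p a p i`, so the terms
with `j ≥ a` contribute at most `b p a p b`. For `j < a` the weight `σ(a + b - j)` is at most
`σ(a - j) (b² + 1) < σ(a - j) p b`, because `8 σ(N) ≤ N² + 10 N` while `p b > b² + 1` for `x > 2`;
so these terms contribute less than `a p a p b`. For `a = 1` the same split works except that
`p 2` may exceed `x p 1` by a little, which `σ(b + 1) + σ(b - 1) < p b` absorbs.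
-/

open ArithmeticFunction
open scoped ArithmeticFunction.sigma

theorem Nat.le_div_two_of_mem_properDivisors {n d : ℕ} (hd : d ∈ n.properDivisors) :
    d ≤ n / 2 := by
  obtain ⟨⟨k, rfl⟩, hlt⟩ := Nat.mem_properDivisors.1 hd
  have hk : 2 ≤ k := by
    by_contra! hk
    interval_cases k <;> simp at hlt
  rw [Nat.le_div_iff_mul_le two_pos]
  nlinarith

namespace ArithmeticFunction

theorem le_sigma_one (n : ℕ) : n ≤ σ 1 n := by
  rw [sigma_one_apply, Nat.sum_divisors_eq_sum_properDivisors_add_self]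
  exact Nat.le_add_left n _

theorem add_one_le_sigma_one {n : ℕ} (hn : 2 ≤ n) : n + 1 ≤ σ 1 n := by
  rw [sigma_one_apply, Nat.sum_divisors_eq_sum_properDivisors_add_self, add_comm n]
  gcongr
  exact single_le_sum (f := fun i => i) (fun _ _ => Nat.zero_le _)
    (Nat.one_mem_properDivisors_iff_one_lt.2 hn)

theorem eight_mul_sigma_one_le (n : ℕ) : 8 * σ 1 n ≤ n ^ 2 + 10 * n := by
  have hsub : n.properDivisors ⊆ range (n / 2 + 1) := fun d hd =>
    mem_range_succ_iff.2 (Nat.le_div_two_of_mem_properDivisors hd)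
  have hsum := sum_le_sum_of_subset (f := fun i => i) hsub
  have hgauss := sum_range_id_mul_two (n / 2 + 1)
  have hhalf : 2 * (n / 2) ≤ n := Nat.mul_div_le n 2
  rw [Nat.add_sub_cancel] at hgauss
  rw [sigma_one_apply, Nat.sum_divisors_eq_sum_properDivisors_add_self]
  generalize n / 2 = k at *
  nlinarith [Nat.mul_le_mul hhalf hhalf]

theorem sigma_one_add_le_mul {m b : ℕ} (hb : 2 ≤ b) (hm : 1 ≤ m) (hmb : m ≤ b) :
    σ 1 (m + b) ≤ σ 1 m * (b ^ 2 + 1) := by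
  have h1 := eight_mul_sigma_one_le (m + b)
  have h2 := le_sigma_one m
  obtain ⟨k, rfl⟩ : ∃ k, m = k + 1 := ⟨m - 1, by omega⟩
  have hsq : (k + 1 + b) ^ 2 ≤ (k + 1) * (b + 1) ^ 2 := by
    nlinarith [Nat.mul_le_mul_left k (show k + 1 ≤ b ^ 2 by nlinarith)]
  nlinarith

theorem sigma_one_add_sigma_one_le {b : ℕ} (hb : 2 ≤ b) :
    σ 1 (b + 1) + σ 1 (b - 1) ≤ b ^ 2 + 1 := by
  rcases hb.eq_or_lt with rfl | hb
  · decide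
  obtain ⟨c, rfl⟩ : ∃ c, b = c + 1 := ⟨b - 1, by omega⟩
  have h1 := eight_mul_sigma_one_le (c + 2)
  have h2 := eight_mul_sigma_one_le c
  rw [Nat.add_sub_cancel]
  nlinarith

end ArithmeticFunction

theorem sum_range_sub_mul_sq_add_one (m : ℝ) (N : ℕ) :
    ∑ j ∈ range N, (m - j) * ((j : ℝ) ^ 2 + 1) =
      m * (N * (N - 1) * (2 * N - 1) / 6 + N) - ((N * (N - 1) / 2) ^ 2 + N * (N - 1) / 2) := by
  induction N with
  | zero => simp
  | succ N ih => rw [sum_range_succ, ih]; push_cast; ring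

theorem cube_add_le_two_mul_sum_sigma_one (n : ℕ) :
    (n : ℝ) * (n ^ 2 + 1) ≤
      2 * ∑ j ∈ range n, (σ 1 (n - j) : ℝ) * ((j : ℝ) ^ 2 + 1) := by
  cases n with
  | zero => simp
  | succ N =>
    have hσ : ∀ j ∈ range N, ((N + 2 : ℝ) - j) * ((j : ℝ) ^ 2 + 1) ≤
        (σ 1 (N + 1 - j) : ℝ) * ((j : ℝ) ^ 2 + 1) := fun j hj => by
      have hj := mem_range.1 hj
      have h := (Nat.cast_le (α := ℝ)).2 (add_one_le_sigma_one (n := N + 1 - j) (by omega))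
      push_cast [Nat.cast_sub (show j ≤ N + 1 by omega)] at h
      gcongr
      linarith
    have hsum := sum_le_sum hσ
    rw [sum_range_sub_mul_sq_add_one] at hsum
    -- The difference of the two sides is `N (N - 1) (N - 2) (N + 5) / 6`.
    have hpoly : (0 : ℝ) ≤ N * (N - 1) * (N - 2) * (N + 5) := by
      rcases N with _ | _ | N
      · simp
      · simp
      · push_cast; ring_nf; positivity
    rw [sum_range_succ, Nat.add_sub_cancel_left, sigma_one]
    push_cast
    nlinarith

theorem eval_P_zero (x : ℝ) : (P 0).eval x = 1 := by simp [P]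

theorem cast_mul_eval_P (n : ℕ) (x : ℝ) :
    n * (P n).eval x = x * ∑ j ∈ range n, (σ 1 (n - j) : ℝ) * (P j).eval x := by
  cases n with
  | zero => simp
  | succ n =>
    rw [← sum_range_reflect]
    simp only [P, eval_smul, eval_mul, eval_X, eval_finsetSum, smul_eq_mul, sigma_one_apply,
      add_tsub_cancel_right]
    push_cast
    rw [← mul_assoc, mul_inv_cancel₀ (by positivity), one_mul]
    refine congrArg _ (sum_congr rfl fun k hk => ?_)
    rw [show n + 1 - (n - k) = k + 1 by grind]

theorem cast_add_mul_eval_P_add (a b : ℕ) (x : ℝ) :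
    ((a + b : ℕ) : ℝ) * (P (a + b)).eval x =
      x * (∑ j ∈ range a, (σ 1 (a + b - j) : ℝ) * (P j).eval x +
        ∑ i ∈ range b, (σ 1 (b - i) : ℝ) * (P (a + i)).eval x) := by
  rw [cast_mul_eval_P, sum_range_add]
  simp only [Nat.add_sub_add_left]

theorem eval_P_one (x : ℝ) : (P 1).eval x = x := by
  simpa [eval_P_zero] using cast_mul_eval_P 1 x

theorem eval_P_two (x : ℝ) : (P 2).eval x = x * (x + 3) / 2 := by
  have h := cast_mul_eval_P 2 x
  simp only [sum_range_succ, range_zero, sum_empty, eval_P_zero, eval_P_one] at h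
  rw [show σ 1 2 = 3 by decide, sigma_one] at h
  push_cast at h
  linarith

theorem eval_P_pos {x : ℝ} (hx : 0 < x) (n : ℕ) : 0 < (P n).eval x := by
  induction n using Nat.strong_induction_on with
  | _ n ih =>
    rcases n.eq_zero_or_pos with rfl | hn
    · simp [eval_P_zero]
    have hsum : 0 < ∑ j ∈ range n, (σ 1 (n - j) : ℝ) * (P j).eval x :=
      sum_pos (fun j hj => mul_pos (Nat.cast_pos.2 (sigma_pos 1 _ (by grind)))
        (ih j (mem_range.1 hj))) (nonempty_range_iff.2 hn.ne')
    have := cast_mul_eval_P n x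
    have : (0 : ℝ) < n := by exact_mod_cast hn
    nlinarith [mul_pos hx hsum]

theorem half_mul_sq_add_one_le_eval_P {x : ℝ} (hx : 2 ≤ x) {n : ℕ} (hn : n ≠ 0)
    (h : ∀ j < n, (j : ℝ) ^ 2 + 1 ≤ (P j).eval x) :
    x / 2 * ((n : ℝ) ^ 2 + 1) ≤ (P n).eval x := by
  have hsum : ∑ j ∈ range n, (σ 1 (n - j) : ℝ) * ((j : ℝ) ^ 2 + 1) ≤
      ∑ j ∈ range n, (σ 1 (n - j) : ℝ) * (P j).eval x :=
    sum_le_sum fun j hj => by gcongr; exact h j (mem_range.1 hj)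
  have hrec := cast_mul_eval_P n x
  have hcube := cube_add_le_two_mul_sum_sigma_one n
  have hn' : (0 : ℝ) < n := by positivity
  have : (n : ℝ) * (x / 2 * ((n : ℝ) ^ 2 + 1)) ≤ n * (P n).eval x := by
    nlinarith [mul_le_mul_of_nonneg_left hsum (by linarith : (0 : ℝ) ≤ x)]
  exact le_of_mul_le_mul_left this hn'

theorem sq_add_one_le_eval_P {x : ℝ} (hx : 2 ≤ x) (n : ℕ) :
    (n : ℝ) ^ 2 + 1 ≤ (P n).eval x := by
  induction n using Nat.strong_induction_on with
  | _ n ih =>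
    rcases eq_or_ne n 0 with rfl | hn
    · simp [eval_P_zero]
    have := half_mul_sq_add_one_le_eval_P hx hn ih
    nlinarith

theorem sq_add_one_lt_eval_P {x : ℝ} (hx : 2 < x) {n : ℕ} (hn : n ≠ 0) :
    (n : ℝ) ^ 2 + 1 < (P n).eval x := by
  have := half_mul_sq_add_one_le_eval_P hx.le hn fun j _ => sq_add_one_le_eval_P hx.le j
  nlinarith
theorem eval_P_one_add_lt {x : ℝ} (hx : 2 < x) {b : ℕ} (hb : 2 ≤ b) :
    (P (1 + b)).eval x < x * (P b).eval x := by
  induction b using Nat.strong_induction_on with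
  | _ b ih =>
    have hx0 : 0 < x := by linarith
    -- `P (1 + i) ≤ x * P i` except at `i = 1`, where `P 2 - x ^ 2 = x (3 - x) / 2 ≤ 1`.
    have hstep : ∀ i ∈ range b, (σ 1 (b - i) : ℝ) * (P (1 + i)).eval x ≤
        x * ((σ 1 (b - i) : ℝ) * (P i).eval x) + if i = 1 then (σ 1 (b - 1) : ℝ) else 0 :=
      fun i hi => by
        have hσ : (0 : ℝ) ≤ σ 1 (b - i) := Nat.cast_nonneg _
        rcases (by omega : i = 0 ∨ i = 1 ∨ 2 ≤ i) with rfl | rfl | hi2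
        · simp [eval_P_zero, eval_P_one, mul_comm]
        · rw [if_pos rfl, eval_P_two, eval_P_one]
          have hx12 : (0 : ℝ) ≤ (x - 1) * (x - 2) := mul_nonneg (by linarith) (by linarith)
          nlinarith [mul_nonneg hσ hx12]
        · rw [if_neg (by omega), add_zero, mul_left_comm]
          exact mul_le_mul_of_nonneg_left (ih i (mem_range.1 hi) hi2).le hσ
    have hhead := sum_le_sum hstep
    rw [sum_add_distrib, ← mul_sum, ← cast_mul_eval_P, sum_ite_eq',
      if_pos (mem_range.2 (by omega))] at hhead
    have hσ : (σ 1 (1 + b) : ℝ) + σ 1 (b - 1) < (P b).eval x := by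
      have h : (σ 1 (b + 1) : ℝ) + σ 1 (b - 1) ≤ (b : ℝ) ^ 2 + 1 := by
        exact_mod_cast sigma_one_add_sigma_one_le hb
      rw [add_comm 1 b]
      exact h.trans_lt (sq_add_one_lt_eval_P hx (by omega))
    have hsplit := cast_add_mul_eval_P_add 1 b x
    simp only [range_one, sum_singleton, eval_P_zero, Nat.sub_zero, mul_one] at hsplit
    have : ((1 + b : ℕ) : ℝ) * (P (1 + b)).eval x <
        ((1 + b : ℕ) : ℝ) * (x * (P b).eval x) := by
      rw [hsplit]
      push_cast
      nlinarith
    exact lt_of_mul_lt_mul_left this (by positivity)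

theorem eval_P_add_lt_mul_of_le {x : ℝ} (hx : 2 < x) {a b : ℕ} (ha : 2 ≤ a) (hab : a ≤ b)
    (ih : ∀ i, 1 ≤ i → i < b → (P (a + i)).eval x < (P a).eval x * (P i).eval x) :
    (P (a + b)).eval x < (P a).eval x * (P b).eval x := by
  have hx0 : 0 < x := by linarith
  have hpos := eval_P_pos hx0
  have hlow := sq_add_one_lt_eval_P hx (n := b) (by omega)
  have htail : ∑ j ∈ range a, (σ 1 (a + b - j) : ℝ) * (P j).eval x <
      ∑ j ∈ range a, (P b).eval x * ((σ 1 (a - j) : ℝ) * (P j).eval x) := by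
    refine sum_lt_sum_of_nonempty (nonempty_range_iff.2 (by omega)) fun j hj => ?_
    have hj := mem_range.1 hj
    have hσ : (σ 1 (a + b - j) : ℝ) ≤ σ 1 (a - j) * ((b : ℝ) ^ 2 + 1) := by
      rw [show a + b - j = a - j + b by omega]
      exact_mod_cast sigma_one_add_le_mul (by omega) (by omega) (by omega)
    have hσpos : (0 : ℝ) < σ 1 (a - j) := Nat.cast_pos.2 (sigma_pos 1 _ (by omega))
    rw [← mul_assoc, mul_comm ((P b).eval x)]
    exact mul_lt_mul_of_pos_right (hσ.trans_lt (mul_lt_mul_of_pos_left hlow hσpos)) (hpos j)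
  have hhead : ∑ i ∈ range b, (σ 1 (b - i) : ℝ) * (P (a + i)).eval x ≤
      ∑ i ∈ range b, (P a).eval x * ((σ 1 (b - i) : ℝ) * (P i).eval x) := by
    refine sum_le_sum fun i hi => ?_
    rw [mul_left_comm]
    gcongr
    rcases eq_or_ne i 0 with rfl | hi0
    · simp [eval_P_zero]
    · exact (ih i (by omega) (mem_range.1 hi)).le
  rw [← mul_sum] at htail hhead
  have hsplit := cast_add_mul_eval_P_add a b x
  have hrec_a := cast_mul_eval_P a x
  have hrec_b := cast_mul_eval_P b x
  push_cast at hsplit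
  have : ((a : ℝ) + b) * (P (a + b)).eval x < (a + b) * ((P a).eval x * (P b).eval x) := by
    rw [hsplit, mul_add]
    calc
      _ < (P b).eval x * (x * ∑ j ∈ range a, (σ 1 (a - j) : ℝ) * (P j).eval x) +
          (P a).eval x * (x * ∑ i ∈ range b, (σ 1 (b - i) : ℝ) * (P i).eval x) := by
        rw [mul_left_comm _ x, mul_left_comm _ x]
        exact add_lt_add_of_lt_of_le (mul_lt_mul_of_pos_left htail hx0)
          (mul_le_mul_of_nonneg_left hhead hx0.le)
      _ = _ := by rw [← hrec_a, ← hrec_b]; ring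
  exact lt_of_mul_lt_mul_left this (by positivity)

theorem stmt11 (a b : ℕ) (ha : 1 ≤ a) (hb : 1 ≤ b) (hab : 2 < a + b)
    (x : ℝ) (hx : 2 < x) :
    (P (a + b)).eval x < (P a).eval x * (P b).eval x := by
  obtain ⟨n, hn⟩ : ∃ n, a + b = n := ⟨_, rfl⟩
  induction n using Nat.strong_induction_on generalizing a b with
  | _ n ih =>
    wlog hle : a ≤ b generalizing a b
    · rw [add_comm, mul_comm]
      exact this b a hb ha (by omega) (by omega) (by omega)
    rcases (by omega : a = 1 ∨ 2 ≤ a) with rfl | ha2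
    · rw [eval_P_one]
      exact eval_P_one_add_lt hx (by omega)
    · exact eval_P_add_lt_mul_of_le hx ha2 hle fun i hi hib =>
        ih (a + i) (by omega) a i ha hi (by omega) rfl
end

section
/- For every n ≥ 1, the derivative of the polynomial P_n satisfies P_n′(x) = ∑_{k=1}^n (σ(k)/k)·P_{n−k}(x). -/
open Polynomial Finset

/-!
Differentiating `n P_n = X ∑ σ(k) P_{n-k}` gives
`n P_n' = ∑ σ(k) P_{n-k} + X ∑ σ(k) P_{n-k}'`. The candidate `S_n = ∑ (σ(k)/k) P_{n-k}`
satisfies the same relation: split `n = k + (n - k)` in `n S_n`, expand `(n - k) P_{n-k}` by the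
recurrence and exchange the two sums. Since the relation determines `n P_n'` from the `P_m'`
with `m < n`, strong induction gives `P_n' = S_n`.
-/

open ArithmeticFunction
open scoped ArithmeticFunction.sigma

theorem sum_Icc_sum_Icc_sub_comm {M : Type*} [AddCommMonoid M] (n : ℕ) (f : ℕ → ℕ → M) :
    ∑ k ∈ Icc 1 n, ∑ j ∈ Icc 1 (n - k), f k j = ∑ k ∈ Icc 1 n, ∑ j ∈ Icc 1 (n - k), f j k :=
  sum_comm' fun k j => by simp only [mem_Icc]; omega

theorem natCast_smul_P (n : ℕ) :
    (n : ℝ) • P n = X * ∑ k ∈ Icc 1 n, (σ 1 k : ℝ) • P (n - k) := by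
  cases n with
  | zero => simp
  | succ m =>
    rw [P, smul_smul, Nat.cast_succ, mul_inv_cancel₀ (by positivity), one_smul,
      ← Ico_add_one_right_eq_Icc, sum_Ico_eq_sum_range]
    simp [sigma_one_apply, add_comm 1]

theorem natCast_smul_derivative_P (n : ℕ) :
    (n : ℝ) • derivative (P n) = ∑ k ∈ Icc 1 n, (σ 1 k : ℝ) • P (n - k) +
      X * ∑ k ∈ Icc 1 n, (σ 1 k : ℝ) • derivative (P (n - k)) := by
  simpa [derivative_sum, derivative_smul] using congrArg derivative (natCast_smul_P n)

theorem natCast_smul_sum_sigma_div_smul_P (n : ℕ) :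
    (n : ℝ) • ∑ k ∈ Icc 1 n, (σ 1 k / k : ℝ) • P (n - k) = ∑ k ∈ Icc 1 n, (σ 1 k : ℝ) • P (n - k) +
      X * ∑ k ∈ Icc 1 n, (σ 1 k : ℝ) • ∑ j ∈ Icc 1 (n - k), (σ 1 j / j : ℝ) • P (n - k - j) := by
  have split_n : ∀ k ∈ Icc 1 n, (n : ℝ) • (σ 1 k / k : ℝ) • P (n - k) =
      (σ 1 k : ℝ) • P (n - k) +
        X * ∑ j ∈ Icc 1 (n - k), (σ 1 k / k * σ 1 j : ℝ) • P (n - k - j) := by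
    intro k hk
    obtain ⟨hk_pos, hk_le⟩ := mem_Icc.mp hk
    have hk_ne : (k : ℝ) ≠ 0 := Nat.cast_ne_zero.mpr (by omega)
    have n_eq : (n : ℝ) * (σ 1 k / k) = σ 1 k + σ 1 k / k * (n - k : ℕ) := by
      rw [Nat.cast_sub hk_le]
      field_simp
      ring
    rw [smul_smul, n_eq, add_smul, ← smul_smul, natCast_smul_P, ← mul_smul_comm, smul_sum]
    simp only [smul_smul]
  rw [smul_sum, sum_congr rfl split_n, sum_add_distrib, ← mul_sum, sum_Icc_sum_Icc_sub_comm]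
  congr 2
  refine sum_congr rfl fun k _ => ?_
  rw [smul_sum]
  refine sum_congr rfl fun j _ => ?_
  rw [smul_smul, Nat.sub_right_comm, mul_comm]

theorem stmt12_general (n : ℕ) :
    Polynomial.derivative (P n) =
      ∑ k ∈ Finset.Icc 1 n, (((∑ d ∈ k.divisors, d : ℕ) : ℝ) / k) • P (n - k) := by
  simp only [← sigma_one_apply]
  induction n using Nat.strong_induction_on with
  | _ n ih =>
    rcases Nat.eq_zero_or_pos n with rfl | hn
    · simp [P]
    rw [← smul_right_inj (Nat.cast_ne_zero.mpr hn.ne' : (n : ℝ) ≠ 0), natCast_smul_derivative_P,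
      natCast_smul_sum_sigma_div_smul_P]
    congr 2
    refine sum_congr rfl fun k hk => ?_
    rw [ih (n - k) (by simp only [mem_Icc] at hk; omega)]

theorem stmt12 (n : ℕ) (hn : 1 ≤ n) :
    Polynomial.derivative (P n) =
      ∑ k ∈ Finset.Icc 1 n, (((∑ d ∈ k.divisors, d : ℕ) : ℝ) / k) • P (n - k) :=
  stmt12_general n
end

section
/- Let a ≥ 7 be an integer and define F_m(x) := ((x+3)/2)·P_{m−1}(x) − P_m(x). If F_m(x) > 0 for all real x > 1 and all integers m with 3 ≤ m < a, then F_a′(x) > 0 for all real x > 1. -/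
open Polynomial Finset

noncomputable def sg (k : ℕ) : ℝ := ((∑ d ∈ k.divisors, d : ℕ) : ℝ)

lemma P_succ (n : ℕ) : P (n+1) = ((n + 1 : ℝ)⁻¹) • (X * ∑ k ∈ Finset.range (n + 1),
    sg (k+1) • P (n - k)) := by rw [P]; rfl

lemma P_rec (n : ℕ) : ((n+1 : ℝ)) • P (n+1) = X * ∑ k ∈ Finset.range (n + 1),
    sg (k+1) • P (n - k) := by
  rw [P_succ, smul_smul, mul_inv_cancel₀ (by positivity : ((n:ℝ)+1) ≠ 0), one_smul]

lemma sg_nonneg (k : ℕ) : 0 ≤ sg k := by unfold sg; positivity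

lemma le_sg (k : ℕ) (hk : k ≠ 0) : (k : ℝ) ≤ sg k := by
  have h : k ∈ k.divisors := Nat.mem_divisors_self k hk
  have := Finset.single_le_sum (f := fun d => (d:ℕ)) (fun i _ => Nat.zero_le i) h
  unfold sg; exact_mod_cast this

lemma one_le_s (m : ℕ) (hm : m ≠ 0) : 1 ≤ sg m / m := by
  rw [le_div_iff₀ (by exact_mod_cast Nat.pos_of_ne_zero hm : (0:ℝ) < m), one_mul]
  exact le_sg m hm

lemma coeff_nonneg (n : ℕ) : ∀ i, 0 ≤ (P n).coeff i := by
  induction n using Nat.strong_induction_on with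
  | _ n ih =>
    intro i
    cases n with
    | zero =>
      simp only [P, Polynomial.coeff_one]
      split <;> norm_num
    | succ n =>
      rw [P_succ, Polynomial.coeff_smul]
      refine mul_nonneg (by positivity) ?_
      cases i with
      | zero => simp [Polynomial.mul_coeff_zero]
      | succ i =>
        rw [Polynomial.coeff_X_mul, Polynomial.finset_sum_coeff]
        refine Finset.sum_nonneg fun k hk => ?_
        rw [Polynomial.coeff_smul]
        exact mul_nonneg (sg_nonneg _) (ih (n-k) (by omega) i)

lemma coeff0 (n : ℕ) : (P n).coeff 0 = if n = 0 then 1 else 0 := by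
  cases n with
  | zero => simp [P]
  | succ n => simp [P_succ, Polynomial.coeff_smul, Polynomial.mul_coeff_zero]

lemma coeff1 (n : ℕ) : (P (n+1)).coeff 1 = sg (n+1) / (n+1) := by
  rw [P_succ, Polynomial.coeff_smul]
  rw [show (1:ℕ) = 0 + 1 from rfl, Polynomial.coeff_X_mul, Polynomial.finset_sum_coeff]
  have : ∀ k ∈ Finset.range (n+1), (sg (k+1) • P (n-k)).coeff 0
      = if k = n then sg (n+1) else 0 := by
    intro k hk
    rw [Polynomial.coeff_smul, coeff0]
    simp only [Finset.mem_range] at hk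
    rcases eq_or_ne k n with h | h
    · simp [h]
    · have : n - k ≠ 0 := by omega
      simp [this, h]
  rw [Finset.sum_congr rfl this, Finset.sum_ite_eq' (Finset.range (n+1)) n]
  simp [div_eq_inv_mul]

lemma gauss_s13 (n : ℕ) : ∑ k ∈ Finset.range n, (k+1:ℝ) = n*(n+1)/2 := by
  induction n with
  | zero => simp
  | succ n ih => rw [Finset.sum_range_succ, ih]; push_cast; ring

lemma coeff2 (n : ℕ) : (n:ℝ)/2 ≤ (P (n+1)).coeff 2 := by
  rw [P_succ, Polynomial.coeff_smul]
  rw [show (2:ℕ) = 1 + 1 from rfl, Polynomial.coeff_X_mul, Polynomial.finset_sum_coeff]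
  have key : ∀ k ∈ Finset.range (n+1), (if k < n then (k+1:ℝ) else 0)
      ≤ (sg (k+1) • P (n-k)).coeff 1 := by
    intro k hk
    rw [Polynomial.coeff_smul, smul_eq_mul]
    split
    · next h =>
      obtain ⟨m, hm⟩ : ∃ m, n - k = m + 1 := ⟨n - k - 1, by omega⟩
      rw [hm, coeff1]
      have h1 : (k+1:ℝ) ≤ sg (k+1) := by exact_mod_cast le_sg (k+1) (by omega)
      have h2 : 1 ≤ sg (m+1) / ((m:ℝ)+1) := by
        have := one_le_s (m+1) (by omega); push_cast at this ⊢; exact this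
      calc (k+1:ℝ) = (k+1) * 1 := by ring
        _ ≤ sg (k+1) * (sg (m+1) / ((m:ℝ)+1)) :=
            mul_le_mul h1 h2 (by norm_num) (sg_nonneg _)
    · exact mul_nonneg (sg_nonneg _) (coeff_nonneg _ _)
  have hsum := Finset.sum_le_sum key
  have hg : ∑ k ∈ Finset.range (n+1), (if k < n then (k+1:ℝ) else 0)
      = n * ((n:ℝ)+1) / 2 := by
    rw [Finset.sum_range_succ]
    simp only [lt_irrefl, if_false, add_zero]
    rw [Finset.sum_congr rfl (fun k hk => if_pos (Finset.mem_range.mp hk)), gauss_s13]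
  rw [hg] at hsum
  rw [smul_eq_mul]
  calc (n:ℝ)/2 = ((n:ℝ)+1)⁻¹ * (n * ((n:ℝ)+1) / 2) := by field_simp
    _ ≤ _ := mul_le_mul_of_nonneg_left hsum (by positivity)

lemma deriv_P (n : ℕ) : derivative (P n)
    = ∑ k ∈ Finset.range n, (sg (k+1)/((k:ℝ)+1)) • P (n - (k+1)) := by
  induction n using Nat.strong_induction_on with
  | _ n ih =>
  cases n with
  | zero => simp [P]
  | succ n =>
    rw [P_succ, derivative_smul, derivative_mul, derivative_X, one_mul, derivative_sum]
    have hder : ∀ k ∈ Finset.range (n+1), derivative (sg (k+1) • P (n-k))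
        = ∑ j ∈ Finset.range (n-k), (sg (k+1) * (sg (j+1)/((j:ℝ)+1))) • P (n - (k+j+1)) := by
      intro k hk
      rw [derivative_smul, ih (n-k) (by omega), Finset.smul_sum]
      refine Finset.sum_congr rfl fun j hj => ?_
      rw [smul_smul]
      congr 2
      omega
    rw [Finset.sum_congr rfl hder]
    have hswap : ∑ k ∈ Finset.range (n+1), ∑ j ∈ Finset.range (n-k),
          (sg (k+1) * (sg (j+1)/((j:ℝ)+1))) • P (n - (k+j+1))
        = ∑ j ∈ Finset.range n, ∑ k ∈ Finset.range (n-j),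
          (sg (k+1) * (sg (j+1)/((j:ℝ)+1))) • P (n - (k+j+1)) := by
      refine Finset.sum_comm' fun k j => ?_
      simp only [Finset.mem_range]
      omega
    rw [hswap, Finset.mul_sum]
    have hXG : ∀ j ∈ Finset.range n, (X : Polynomial ℝ) * ∑ k ∈ Finset.range (n-j),
          (sg (k+1) * (sg (j+1)/((j:ℝ)+1))) • P (n - (k+j+1))
        = ((sg (j+1)/((j:ℝ)+1)) * ((n-j : ℕ) : ℝ)) • P (n-j) := by
      intro j hj
      simp only [Finset.mem_range] at hj
      have hG : ∑ k ∈ Finset.range (n-j), (sg (k+1) * (sg (j+1)/((j:ℝ)+1))) • P (n - (k+j+1))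
          = (sg (j+1)/((j:ℝ)+1)) • ∑ k ∈ Finset.range (n-j), sg (k+1) • P ((n-j-1) - k) := by
        rw [Finset.smul_sum]
        refine Finset.sum_congr rfl fun k hk => ?_
        have hidx : n - (k+j+1) = n - j - 1 - k := by omega
        rw [hidx, smul_smul, mul_comm]
      rw [hG, mul_smul_comm]
      obtain ⟨m, hm⟩ : ∃ m, n - j = m + 1 := ⟨n - j - 1, by omega⟩
      rw [hm, Nat.add_sub_cancel, ← P_rec m, smul_smul]
      congr 2
      push_cast
      ring
    rw [Finset.sum_congr rfl hXG]
    rw [Finset.sum_range_succ (fun k => sg (k+1) • P (n-k)), Finset.sum_range_succ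
      (fun k => (sg (k+1)/((k:ℝ)+1)) • P (n+1 - (k+1)))]
    rw [add_right_comm, smul_add, ← Finset.sum_add_distrib, Finset.smul_sum]
    congr 1
    · refine Finset.sum_congr rfl fun k hk => ?_
      simp only [Finset.mem_range] at hk
      rw [← add_smul, smul_smul, Nat.succ_sub_succ]
      congr 1
      have hc : ((n - k : ℕ) : ℝ) = (n : ℝ) - k := by
        have : k ≤ n := by omega
        push_cast [this]; ring
      rw [hc]
      have h1 : ((k:ℝ)+1) ≠ 0 := by positivity
      have h2 : ((n:ℝ)+1) ≠ 0 := by positivity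
      field_simp
      ring
    · rw [smul_smul, Nat.succ_sub_succ, Nat.sub_self]
      congr 1
      field_simp

lemma sg_one : sg 1 = 1 := by unfold sg; norm_num

lemma P_one : P 1 = X := by
  rw [P_succ]
  simp [sg_one]
  rw [P]

lemma sg_two : sg 2 = 3 := by
  unfold sg
  rw [show Nat.divisors 2 = {1, 2} by decide]
  norm_num

lemma P_two : P 2 = Polynomial.C (2:ℝ)⁻¹ * (X^2 + Polynomial.C 3 * X) := by
  rw [P_succ]
  rw [Finset.sum_range_succ, Finset.sum_range_one]
  norm_num [sg_one, sg_two, P_one]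
  rw [show P 0 = 1 from by rw [P], Polynomial.smul_eq_C_mul, Polynomial.smul_eq_C_mul]
  ring

lemma eval_nonneg_of_coeff (p : Polynomial ℝ) (h : ∀ i, 0 ≤ p.coeff i) (x : ℝ) (hx : 0 ≤ x) :
    0 ≤ p.eval x := by
  rw [Polynomial.eval_eq_sum_range]
  exact Finset.sum_nonneg fun i _ => mul_nonneg (h i) (pow_nonneg hx i)

lemma eval_ge_two_coeffs (p : Polynomial ℝ) (h : ∀ i, 0 ≤ p.coeff i) (x : ℝ) (hx : 0 ≤ x) :
    p.coeff 1 * x + p.coeff 2 * x^2 ≤ p.eval x := by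
  set q := p - (Polynomial.C (p.coeff 1) * X + Polynomial.C (p.coeff 2) * X^2) with hq
  have hqc : ∀ i, 0 ≤ q.coeff i := by
    intro i
    simp only [hq, Polynomial.coeff_sub, Polynomial.coeff_add, Polynomial.coeff_C_mul,
      Polynomial.coeff_X, Polynomial.coeff_X_pow]
    rcases eq_or_ne i 1 with rfl | h1
    · norm_num
    · rcases eq_or_ne i 2 with rfl | h2
      · norm_num
      · have e1 : (1 = i) = False := by simp [Ne.symm h1]
        simp [e1, h2, h i]
  have := eval_nonneg_of_coeff q hqc x hx
  simp only [hq, Polynomial.eval_sub, Polynomial.eval_add, Polynomial.eval_mul,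
    Polynomial.eval_C, Polynomial.eval_X, Polynomial.eval_pow] at this
  linarith

lemma harmonic_le (a : ℕ) (ha : 7 ≤ a) : ∑ d ∈ Finset.Icc 1 a, (1:ℝ)/d ≤ ((a:ℝ)+4)/4 := by
  induction a, ha using Nat.le_induction with
  | base =>
    rw [show Finset.Icc 1 7 = {1,2,3,4,5,6,7} by rfl]
    norm_num
  | succ n hn ih =>
    rw [Finset.sum_Icc_succ_top (by omega : 1 ≤ n+1)]
    have h1 : (1:ℝ)/((n:ℝ)+1) ≤ 1/4 := by
      apply div_le_div_of_nonneg_left (by norm_num) (by norm_num)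
      have : (7:ℝ) ≤ (n:ℝ) := by exact_mod_cast hn
      linarith
    push_cast
    push_cast at ih
    linarith

lemma sg_div_le (a : ℕ) (ha : 7 ≤ a) : sg a / (a:ℝ) ≤ ((a:ℝ)+4)/4 := by
  have ha0 : (0:ℝ) < a := by exact_mod_cast (by omega : 0 < a)
  rw [div_le_iff₀ ha0]
  have h1 : sg a = ((∑ d ∈ a.divisors, a / d : ℕ) : ℝ) := by
    unfold sg
    congr 1
    exact (Nat.sum_div_divisors a _).symm
  have h2 : ((∑ d ∈ a.divisors, a / d : ℕ) : ℝ) ≤ ∑ d ∈ a.divisors, (a:ℝ)/d := by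
    push_cast
    exact Finset.sum_le_sum fun d _ => Nat.cast_div_le
  have h3 : ∑ d ∈ a.divisors, (a:ℝ)/d ≤ ∑ d ∈ Finset.Icc 1 a, (a:ℝ)/d := by
    apply Finset.sum_le_sum_of_subset_of_nonneg
    · intro d hd
      rw [Nat.mem_divisors] at hd
      rw [Finset.mem_Icc]
      exact ⟨Nat.pos_of_dvd_of_pos hd.1 (by omega), Nat.le_of_dvd (by omega) hd.1⟩
    · intro d _ _; positivity
  have h4 : ∑ d ∈ Finset.Icc 1 a, (a:ℝ)/d = (a:ℝ) * ∑ d ∈ Finset.Icc 1 a, (1:ℝ)/d := by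
    rw [Finset.mul_sum]
    exact Finset.sum_congr rfl fun d _ => by ring
  have h5 := harmonic_le a ha
  have h6 : (a:ℝ) * (∑ d ∈ Finset.Icc 1 a, (1:ℝ)/d) ≤ (a:ℝ) * (((a:ℝ)+4)/4) := by
    exact mul_le_mul_of_nonneg_left h5 (le_of_lt ha0)
  nlinarith [h1, h2, h3]

set_option maxHeartbeats 1000000 in
theorem stmt13 (a : ℕ) (ha : 7 ≤ a) (F : ℕ → Polynomial ℝ)
    (hF : ∀ m, F m = Polynomial.C ((1 : ℝ) / 2) * (Polynomial.X + 3) * P (m - 1) - P m)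
    (hyp : ∀ m, 3 ≤ m → m < a → ∀ x : ℝ, 1 < x → 0 < (F m).eval x) :
    ∀ x : ℝ, 1 < x → 0 < (Polynomial.derivative (F a)).eval x := by
  intro x hx
  obtain ⟨b, rfl⟩ : ∃ b, a = b + 1 := ⟨a-1, by omega⟩
  have hb : 6 ≤ b := by omega
  have hx0 : (0:ℝ) ≤ x := by linarith
  set e : ℕ → ℝ := fun m => (P m).eval x with he
  set s : ℕ → ℝ := fun k => sg (k+1)/((k:ℝ)+1) with hs
  set fv : ℕ → ℝ := fun m => (1/2)*(x+3) * e (m-1) - e m with hfv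
  have hevF : ∀ m, (F m).eval x = fv m := by
    intro m
    rw [hF]
    simp only [Polynomial.eval_sub, Polynomial.eval_mul, Polynomial.eval_add,
      Polynomial.eval_C, Polynomial.eval_X, Polynomial.eval_ofNat, hfv, he]
    try ring
  -- derivative of F at eval level
  have hdF : (derivative (F (b+1))).eval x
      = (1/2) * e b + (1/2)*(x+3) * (derivative (P b)).eval x
        - (derivative (P (b+1))).eval x := by
    rw [hF]
    simp only [derivative_sub, derivative_mul, derivative_C, derivative_X, derivative_add,
      Nat.add_sub_cancel]
    simp only [Polynomial.eval_sub, Polynomial.eval_add, Polynomial.eval_mul,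
      Polynomial.eval_C, Polynomial.eval_X, Polynomial.eval_ofNat, he]
    have : derivative (3 : Polynomial ℝ) = 0 := by
      simp [Polynomial.derivative_ofNat]
    rw [this]
    simp
    try ring
  have hDb : (derivative (P b)).eval x
      = ∑ k ∈ Finset.range b, s k * e (b-(k+1)) := by
    rw [deriv_P, Polynomial.eval_finset_sum]
    exact Finset.sum_congr rfl fun k hk => by rw [Polynomial.eval_smul, smul_eq_mul]
  have hDb1 : (derivative (P (b+1))).eval x
      = (∑ k ∈ Finset.range b, s k * e (b-k)) + s b := by
    rw [deriv_P, Polynomial.eval_finset_sum, Finset.sum_range_succ]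
    congr 1
    · refine Finset.sum_congr rfl fun k hk => ?_
      rw [Polynomial.eval_smul, smul_eq_mul, Nat.succ_sub_succ]
    · rw [Polynomial.eval_smul, smul_eq_mul, Nat.succ_sub_succ, Nat.sub_self]
      have : (P 0).eval x = 1 := by rw [P]; simp
      rw [this, mul_one]
  have hcomb : (derivative (F (b+1))).eval x
      = (1/2) * e b + (∑ k ∈ Finset.range b, s k * fv (b-k)) - s b := by
    rw [hdF, hDb, hDb1]
    have h1 : (1/2)*(x+3) * (∑ k ∈ Finset.range b, s k * e (b-(k+1)))
        - ∑ k ∈ Finset.range b, s k * e (b-k)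
        = ∑ k ∈ Finset.range b, s k * fv (b-k) := by
      rw [Finset.mul_sum, ← Finset.sum_sub_distrib]
      refine Finset.sum_congr rfl fun k hk => ?_
      have hidx : b - (k+1) = (b-k) - 1 := by omega
      rw [hidx, hfv]
      ring
    linarith
  -- basic facts about fv
  have hone_le_s : ∀ k, 1 ≤ s k := by
    intro k
    have := one_le_s (k+1) (by omega)
    rw [hs]
    push_cast at this ⊢
    exact this
  have hs_nonneg : ∀ k, 0 ≤ s k := fun k => le_trans zero_le_one (hone_le_s k)
  have hfpos : ∀ m, 3 ≤ m → m ≤ b → 0 < fv m := by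
    intro m h3 hmb
    have := hyp m h3 (by omega) x hx
    rwa [hevF] at this
  have hf2 : fv 2 = 0 := by
    rw [hfv]
    have h1 : e 1 = x := by rw [he]; simp [P_one]
    have h2 : e 2 = (x^2 + 3*x)/2 := by
      rw [he]
      simp [P_two]
      ring
    simp only []
    rw [show (2:ℕ) - 1 = 1 from rfl, h1, h2]
    ring
  have hf1 : fv 1 = (3-x)/2 := by
    rw [hfv]
    have h0 : e 0 = 1 := by rw [he]; show (P 0).eval x = 1; rw [P]; simp
    have h1 : e 1 = x := by rw [he]; simp [P_one]
    simp only []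
    rw [show (1:ℕ) - 1 = 0 from rfl, h0, h1]
    ring
  -- lower bound for the sum
  have hsum_ge : s 0 * fv b + s (b-1) * fv 1
      ≤ ∑ k ∈ Finset.range b, s k * fv (b-k) := by
    have hss : ({0, b-1} : Finset ℕ) ⊆ Finset.range b := by
      intro k hk
      simp only [Finset.mem_insert, Finset.mem_singleton] at hk
      rw [Finset.mem_range]
      omega
    have hpair : ∑ k ∈ ({0, b-1} : Finset ℕ), s k * fv (b-k)
        = s 0 * fv b + s (b-1) * fv 1 := by
      rw [Finset.sum_pair (by omega : (0:ℕ) ≠ b-1)]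
      rw [show b - 0 = b from rfl, show b - (b-1) = 1 by omega]
    rw [← hpair]
    apply Finset.sum_le_sum_of_subset_of_nonneg hss
    intro k hkr hk
    simp only [Finset.mem_insert, Finset.mem_singleton, not_or] at hk
    rw [Finset.mem_range] at hkr
    have hm : 2 ≤ b - k := by omega
    rcases eq_or_lt_of_le hm with h | h
    · rw [← h, hf2, mul_zero]
    · exact le_of_lt (mul_pos (lt_of_lt_of_le zero_lt_one (hone_le_s k))
        (hfpos (b-k) (by omega) (by omega)))
  -- lower bound for e b
  have hcoeff1 : (P b).coeff 1 = s (b-1) := by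
    obtain ⟨c, hc⟩ : ∃ c, b = c + 1 := ⟨b-1, by omega⟩
    rw [hc, coeff1, hs]
    rw [show c + 1 - 1 = c from rfl]
  have hcoeff2 : ((b:ℝ)-1)/2 ≤ (P b).coeff 2 := by
    obtain ⟨c, hc⟩ : ∃ c, b = c + 1 := ⟨b-1, by omega⟩
    have := coeff2 c
    rw [hc]
    push_cast at this ⊢
    linarith
  have heb : s (b-1) * x + ((b:ℝ)-1)/2 * x^2 ≤ e b := by
    have h1 := eval_ge_two_coeffs (P b) (coeff_nonneg b) x hx0
    rw [hcoeff1] at h1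
    have h2 : ((b:ℝ)-1)/2 * x^2 ≤ (P b).coeff 2 * x^2 :=
      mul_le_mul_of_nonneg_right hcoeff2 (by positivity)
    rw [he]
    linarith
  -- harmonic bound for s b
  have hsb : s b ≤ ((b:ℝ)+5)/4 := by
    have := sg_div_le (b+1) (by omega)
    rw [hs]
    push_cast at this ⊢
    linarith
  -- final assembly
  rw [hcomb]
  have hx2 : 1 ≤ x^2 := by nlinarith
  have hfb : 0 < fv b := hfpos b (by omega) le_rfl
  have hsfb : fv b ≤ s 0 * fv b := le_mul_of_one_le_left hfb.le (hone_le_s 0)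
  have hkey : (1/2) * (s (b-1) * x) + s (b-1) * fv 1 = (3/2) * s (b-1) := by
    rw [hf1]; ring
  have hb2 : ((b:ℝ)-1)/2 * x^2 ≥ ((b:ℝ)-1)/2 := by
    have hbpos : (0:ℝ) ≤ ((b:ℝ)-1)/2 := by
      have : (6:ℝ) ≤ b := by exact_mod_cast hb
      linarith
    exact le_mul_of_one_le_right hbpos hx2
  have hs1 : (3:ℝ)/2 ≤ (3/2) * s (b-1) := by linarith [hone_le_s (b-1)]
  have h10 : (3:ℝ)/2 * s (b-1) + ((b:ℝ)-1)/4 ≤ 1/2 * e b + s (b-1) * fv 1 := by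
    linarith [heb, hb2, hkey]
  clear_value e s fv
  linarith [hsum_ge, hsfb, h10, hs1, hsb, hfb]
end
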